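/- arXiv:2305.03155 — 11 statements merged into one kernel-verified Lean document; each statement's English description precedes it below -/
import Mathlib

section
/- Let R > 0, c > 0 and set a = √c. Let L : [0,R] → ℝ be continuously differentiable with L ≥ 0 and L(0) = 0, and fix t ∈ (0,R]. Assume that for every continuously differentiable function φ : [0,t] → ℝ with φ ≥ 0, φ′ ≤ 0 and φ(t) = 0 one has −2∫₀^t φ(r)φ′(r)L′(r) dr ≤ 2π·φ(0)² + ∫₀^t (φ′(r))²·L(r) dr + 3c·∫₀^t φ(r)²·L(r) dr. Then for every continuously differentiable function ψ : [0,t] → ℝ with ψ ≥ 0, ψ′ ≤ 0 and ψ(t) = 0 one has −2∫₀^t e^{−2ar}·ψ(r)ψ′(r)·L′(r) dr ≤ 2π·ψ(0)² + ∫₀^t (ψ′(r))²·e^{−2ar}·L(r) dr + 2a·∫₀^t ψ(r)ψ′(r)·e^{−2ar}·L(r) dr. -/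
/-!
Apply the stability inequality to `φ(r) = e^{-ar} ψ(r)`, which is again a nonnegative,
nonincreasing test function vanishing at `t` because `a ≥ 0`. Pointwise, the stability integrand
of `φ` equals the weighted integrand of `ψ` plus `2a · (e^{-2ar} ψ² L)'`, up to a term
`3 (a² - c) e^{-2ar} ψ² L` that vanishes for `a = √c`; the exact derivative integrates to zero
since `ψ(t) = 0` and `L(0) = 0`.
-/

open Real MeasureTheory intervalIntegral Set

theorem hasDerivAt_exp_const_mul_mul {b r g' : ℝ} {g : ℝ → ℝ} (hg : HasDerivAt g g' r) :
    HasDerivAt (fun x => exp (b * x) * g x) (exp (b * r) * (g' + b * g r)) r := by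
  have hexp : HasDerivAt (fun x => exp (b * x)) (exp (b * r) * b) r :=
    ((hasDerivAt_id r).const_mul b).exp.congr_deriv (by simp)
  exact (hexp.mul hg).congr_deriv (by ring)

theorem stability_integrals_exp_neg_mul {t : ℝ} (ht : 0 ≤ t) (a : ℝ)
    {ψ ψ' L L' : ℝ → ℝ}
    (hψ : ∀ r ∈ Icc 0 t, HasDerivAt ψ (ψ' r) r) (hψ' : ContinuousOn ψ' (Icc 0 t))
    (hL : ∀ r ∈ Icc 0 t, HasDerivAt L (L' r) r) (hL' : ContinuousOn L' (Icc 0 t))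
    (hψt : ψ t = 0) (hL0 : L 0 = 0) :
    -2 * (∫ r in 0..t, exp (-a * r) * ψ r * (exp (-a * r) * (ψ' r + -a * ψ r)) * L' r)
      - (∫ r in 0..t, (exp (-a * r) * (ψ' r + -a * ψ r)) ^ 2 * L r)
      - 3 * a ^ 2 * ∫ r in 0..t, (exp (-a * r) * ψ r) ^ 2 * L r
    = -2 * (∫ r in 0..t, exp (-2 * a * r) * (ψ r * ψ' r) * L' r)
      - (∫ r in 0..t, ψ' r ^ 2 * exp (-2 * a * r) * L r)
      - 2 * a * ∫ r in 0..t, ψ r * ψ' r * exp (-2 * a * r) * L r := by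
  have hψc : ContinuousOn ψ (Icc 0 t) := fun r hr => (hψ r hr).continuousAt.continuousWithinAt
  have hLc : ContinuousOn L (Icc 0 t) := fun r hr => (hL r hr).continuousAt.continuousWithinAt
  have hint : ∀ f : ℝ → ℝ, ContinuousOn f (Icc 0 t) → IntervalIntegrable f volume 0 t :=
    fun f hf => hf.intervalIntegrable_of_Icc ht
  have hexp : ∀ r, exp (-a * r) * exp (-a * r) = exp (-2 * a * r) := fun r => by
    rw [← exp_add]; ring_nf
  have hboundary : ∫ r in 0..t, exp (-2 * a * r) * (ψ r ^ 2 * L' r + 2 * ψ r * ψ' r * L r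
      - 2 * a * ψ r ^ 2 * L r) = 0 := by
    have hF : ∀ r ∈ uIcc 0 t, HasDerivAt (fun x => exp (-2 * a * x) * (ψ x ^ 2 * L x))
        (exp (-2 * a * r) * (ψ r ^ 2 * L' r + 2 * ψ r * ψ' r * L r - 2 * a * ψ r ^ 2 * L r))
        r := by
      intro r hr
      rw [uIcc_of_le ht] at hr
      exact (hasDerivAt_exp_const_mul_mul (((hψ r hr).fun_pow 2).fun_mul (hL r hr))).congr_deriv
        (by ring)
    rw [integral_eq_sub_of_hasDerivAt hF (hint _ (by fun_prop))]
    simp [hψt, hL0]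
  calc _ = ∫ r in 0..t, -2 * (exp (-a * r) * ψ r * (exp (-a * r) * (ψ' r + -a * ψ r)) * L' r)
          - (exp (-a * r) * (ψ' r + -a * ψ r)) ^ 2 * L r
          - 3 * a ^ 2 * ((exp (-a * r) * ψ r) ^ 2 * L r) := by
        rw [intervalIntegral.integral_sub, intervalIntegral.integral_sub,
          intervalIntegral.integral_const_mul, intervalIntegral.integral_const_mul]
        all_goals exact hint _ (by fun_prop)
    _ = ∫ r in 0..t, (-2 * (exp (-2 * a * r) * (ψ r * ψ' r) * L' r)
          - ψ' r ^ 2 * exp (-2 * a * r) * L r - 2 * a * (ψ r * ψ' r * exp (-2 * a * r) * L r))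
          + 2 * a * (exp (-2 * a * r) * (ψ r ^ 2 * L' r + 2 * ψ r * ψ' r * L r
            - 2 * a * ψ r ^ 2 * L r)) :=
        integral_congr fun r _ => by
          linear_combination (-2 * (ψ r * (ψ' r - a * ψ r)) * L' r - (ψ' r - a * ψ r) ^ 2 * L r
            - 3 * a ^ 2 * ψ r ^ 2 * L r) * hexp r
    _ = _ := by
        rw [intervalIntegral.integral_add, intervalIntegral.integral_const_mul, hboundary,
          intervalIntegral.integral_sub, intervalIntegral.integral_sub,
          intervalIntegral.integral_const_mul, intervalIntegral.integral_const_mul]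
        · ring
        all_goals exact hint _ (by fun_prop)

theorem stmt_3_general (R c a : ℝ) (hc : 0 < c)
    (ha : a = Real.sqrt c)
    (L L' : ℝ → ℝ)
    (hL : ∀ r ∈ Set.Icc (0:ℝ) R, HasDerivAt L (L' r) r)
    (hL' : ContinuousOn L' (Set.Icc (0:ℝ) R))
    (hL0 : L 0 = 0)
    (t : ℝ) (ht : t ∈ Set.Ioc (0:ℝ) R)
    (hyp : ∀ φ φ' : ℝ → ℝ,
      (∀ r ∈ Set.Icc (0:ℝ) t, HasDerivAt φ (φ' r) r) →
      ContinuousOn φ' (Set.Icc (0:ℝ) t) →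
      (∀ r ∈ Set.Icc (0:ℝ) t, 0 ≤ φ r) →
      (∀ r ∈ Set.Icc (0:ℝ) t, φ' r ≤ 0) →
      φ t = 0 →
      -2 * ∫ r in (0:ℝ)..t, φ r * φ' r * L' r
        ≤ 2 * Real.pi * (φ 0) ^ 2 + (∫ r in (0:ℝ)..t, (φ' r) ^ 2 * L r)
          + 3 * c * ∫ r in (0:ℝ)..t, (φ r) ^ 2 * L r) :
    ∀ ψ ψ' : ℝ → ℝ,
      (∀ r ∈ Set.Icc (0:ℝ) t, HasDerivAt ψ (ψ' r) r) →
      ContinuousOn ψ' (Set.Icc (0:ℝ) t) →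
      (∀ r ∈ Set.Icc (0:ℝ) t, 0 ≤ ψ r) →
      (∀ r ∈ Set.Icc (0:ℝ) t, ψ' r ≤ 0) →
      ψ t = 0 →
      -2 * ∫ r in (0:ℝ)..t, Real.exp (-2 * a * r) * (ψ r * ψ' r) * L' r
        ≤ 2 * Real.pi * (ψ 0) ^ 2
          + (∫ r in (0:ℝ)..t, (ψ' r) ^ 2 * Real.exp (-2 * a * r) * L r)
          + 2 * a * ∫ r in (0:ℝ)..t, ψ r * ψ' r * Real.exp (-2 * a * r) * L r := by
  intro ψ ψ' hψ hψ' hψnn hψ'nonpos hψt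
  have hsub : Icc 0 t ⊆ Icc 0 R := Icc_subset_Icc le_rfl ht.2
  have ha0 : 0 ≤ a := ha ▸ sqrt_nonneg c
  have hac : a ^ 2 = c := ha ▸ sq_sqrt hc.le
  have hψc : ContinuousOn ψ (Icc 0 t) := fun r hr => (hψ r hr).continuousAt.continuousWithinAt
  have H := hyp (fun r => exp (-a * r) * ψ r) (fun r => exp (-a * r) * (ψ' r + -a * ψ r))
    (fun r hr => hasDerivAt_exp_const_mul_mul (hψ r hr)) (by fun_prop)
    (fun r hr => mul_nonneg (exp_nonneg _) (hψnn r hr))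
    (fun r hr => mul_nonpos_of_nonneg_of_nonpos (exp_nonneg _)
      (by linarith [hψ'nonpos r hr, mul_nonneg ha0 (hψnn r hr)]))
    (by simp [hψt])
  have key := stability_integrals_exp_neg_mul ht.1.le a hψ hψ' (fun r hr => hL r (hsub hr))
    (hL'.mono hsub) hψt hL0
  beta_reduce at H
  rw [mul_zero, exp_zero, one_mul, ← hac] at H
  linarith

theorem stmt_3 (R c a : ℝ) (hR : 0 < R) (hc : 0 < c)
    (ha : a = Real.sqrt c)
    (L L' : ℝ → ℝ)
    (hL : ∀ r ∈ Set.Icc (0:ℝ) R, HasDerivAt L (L' r) r)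
    (hL' : ContinuousOn L' (Set.Icc (0:ℝ) R))
    (hLnn : ∀ r ∈ Set.Icc (0:ℝ) R, 0 ≤ L r)
    (hL0 : L 0 = 0)
    (t : ℝ) (ht : t ∈ Set.Ioc (0:ℝ) R)
    (hyp : ∀ φ φ' : ℝ → ℝ,
      (∀ r ∈ Set.Icc (0:ℝ) t, HasDerivAt φ (φ' r) r) →
      ContinuousOn φ' (Set.Icc (0:ℝ) t) →
      (∀ r ∈ Set.Icc (0:ℝ) t, 0 ≤ φ r) →
      (∀ r ∈ Set.Icc (0:ℝ) t, φ' r ≤ 0) →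
      φ t = 0 →
      -2 * ∫ r in (0:ℝ)..t, φ r * φ' r * L' r
        ≤ 2 * Real.pi * (φ 0) ^ 2 + (∫ r in (0:ℝ)..t, (φ' r) ^ 2 * L r)
          + 3 * c * ∫ r in (0:ℝ)..t, (φ r) ^ 2 * L r) :
    ∀ ψ ψ' : ℝ → ℝ,
      (∀ r ∈ Set.Icc (0:ℝ) t, HasDerivAt ψ (ψ' r) r) →
      ContinuousOn ψ' (Set.Icc (0:ℝ) t) →
      (∀ r ∈ Set.Icc (0:ℝ) t, 0 ≤ ψ r) →
      (∀ r ∈ Set.Icc (0:ℝ) t, ψ' r ≤ 0) →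
      ψ t = 0 →
      -2 * ∫ r in (0:ℝ)..t, Real.exp (-2 * a * r) * (ψ r * ψ' r) * L' r
        ≤ 2 * Real.pi * (ψ 0) ^ 2
          + (∫ r in (0:ℝ)..t, (ψ' r) ^ 2 * Real.exp (-2 * a * r) * L r)
          + 2 * a * ∫ r in (0:ℝ)..t, ψ r * ψ' r * Real.exp (-2 * a * r) * L r :=
  stmt_3_general R c a hc ha L L' hL hL' hL0 t ht hyp
end

section
/- Let R > 0, b > 0, and let L : [0,R) → ℝ be a continuous nonnegative function with L(0) = 0 satisfying hypothesis (★_b) on [0,R). Then for every t ∈ (0,R), ∫₀^t e^{−br}·L(r) dr ≤ (4π/3)·t². -/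
open Real MeasureTheory intervalIntegral Set

/-- Hypothesis (★_b): for all `η, t` with `0 < η ≤ t < R`,
`(3/η²)·∫_{t−η}^{t} e^{−br}·L(r) dr + (7b/η²)·∫_{t−η}^{t} (t−r)·e^{−br}·L(r) dr
  ≤ 4π + (4/η)·e^{−b(t−η)}·L(t−η)`. -/
def StarHyp (b R : ℝ) (L : ℝ → ℝ) : Prop :=
  ∀ η t : ℝ, 0 < η → η ≤ t → t < R →
    (3 / η ^ 2) * (∫ r in (t - η)..t, Real.exp (-b * r) * L r)
      + (7 * b / η ^ 2) * (∫ r in (t - η)..t, (t - r) * Real.exp (-b * r) * L r)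
    ≤ 4 * Real.pi + (4 / η) * Real.exp (-b * (t - η)) * L (t - η)

theorem stmt_4 (R b : ℝ) (hR : 0 < R) (hb : 0 < b)
    (L : ℝ → ℝ) (hLcont : ContinuousOn L (Set.Ico (0:ℝ) R))
    (hLnn : ∀ r ∈ Set.Ico (0:ℝ) R, 0 ≤ L r)
    (hL0 : L 0 = 0)
    (hstar : StarHyp b R L) :
    ∀ t ∈ Set.Ioo (0:ℝ) R,
      (∫ r in (0:ℝ)..t, Real.exp (-b * r) * L r) ≤ (4 * Real.pi / 3) * t ^ 2 := by
  intro t ht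
  obtain ⟨ht0, htR⟩ := ht
  have h := hstar t t ht0 le_rfl htR
  rw [sub_self] at h
  rw [hL0, mul_zero] at h
  have h2 : 0 ≤ ∫ r in (0:ℝ)..t, (t - r) * Real.exp (-b * r) * L r := by
    apply intervalIntegral.integral_nonneg ht0.le
    intro r hr
    have hrmem : r ∈ Set.Ico (0:ℝ) R := ⟨hr.1, lt_of_le_of_lt hr.2 htR⟩
    have := hLnn r hrmem
    have h1 : (0:ℝ) ≤ t - r := by linarith [hr.2]
    positivity
  have ht2 : (0:ℝ) < t ^ 2 := pow_pos ht0 2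
  have hcoef : 0 ≤ 7 * b / t ^ 2 := by positivity
  have h' : (3 / t ^ 2) * (∫ r in (0:ℝ)..t, Real.exp (-b * r) * L r) ≤ 4 * Real.pi := by
    nlinarith [mul_nonneg hcoef h2]
  rw [div_mul_eq_mul_div, div_le_iff₀ ht2] at h'
  nlinarith [h']
end

section
/- Let R > 0, b > 0, and let L : [0,R) → ℝ be a continuous nonnegative function with L(0) = 0 satisfying hypothesis (★_b) on [0,R). Then for every t ∈ (0,R), ∫₀^t L(r) dr ≤ (4π/3)·t²·e^{bt}. -/
open Real MeasureTheory intervalIntegral Set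

theorem stmt_5 (R b : ℝ) (hR : 0 < R) (hb : 0 < b)
    (L : ℝ → ℝ) (hLcont : ContinuousOn L (Set.Ico (0:ℝ) R))
    (hLnn : ∀ r ∈ Set.Ico (0:ℝ) R, 0 ≤ L r)
    (hL0 : L 0 = 0)
    (hstar : StarHyp b R L) :
    ∀ t ∈ Set.Ioo (0:ℝ) R,
      (∫ r in (0:ℝ)..t, L r) ≤ (4 * Real.pi / 3) * t ^ 2 * Real.exp (b * t) := by
  intro t ht
  obtain ⟨ht0, htR⟩ := ht
  have hsub : Set.Icc (0:ℝ) t ⊆ Set.Ico 0 R := fun r hr => ⟨hr.1, lt_of_le_of_lt hr.2 htR⟩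
  have hLc : ContinuousOn L (Set.Icc 0 t) := hLcont.mono hsub
  have hLnn' : ∀ r ∈ Set.Icc (0:ℝ) t, 0 ≤ L r := fun r hr => hLnn r (hsub hr)
  have hec : ContinuousOn (fun r => Real.exp (-b * r) * L r) (Set.Icc 0 t) :=
    ((Real.continuous_exp.comp (continuous_const.mul continuous_id)).continuousOn).mul hLc
  have huIcc : Set.uIcc (0:ℝ) t = Set.Icc 0 t := Set.uIcc_of_le ht0.le
  have hint1 : IntervalIntegrable (fun r => Real.exp (-b * r) * L r) volume 0 t :=
    ContinuousOn.intervalIntegrable (by rw [huIcc]; exact hec)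
  have hintL : IntervalIntegrable L volume 0 t :=
    ContinuousOn.intervalIntegrable (by rw [huIcc]; exact hLc)
  have hint2 : IntervalIntegrable (fun r => Real.exp (b * t) * (Real.exp (-b * r) * L r))
      volume 0 t := hint1.const_mul _
  -- Apply the star hypothesis with η = t
  have hstar' := hstar t t ht0 le_rfl htR
  rw [sub_self] at hstar'
  have hJ : 0 ≤ ∫ r in (0:ℝ)..t, (t - r) * Real.exp (-b * r) * L r := by
    apply intervalIntegral.integral_nonneg ht0.le
    intro r hr
    have := hLnn' r hr
    have h1 : 0 ≤ t - r := by linarith [hr.2]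
    positivity
  have ht2 : (0:ℝ) < t ^ 2 := pow_pos ht0 2
  have hJ' : 0 ≤ (7 * b / t ^ 2) * ∫ r in (0:ℝ)..t, (t - r) * Real.exp (-b * r) * L r := by
    apply mul_nonneg (by positivity) hJ
  have key : (3 / t ^ 2) * (∫ r in (0:ℝ)..t, Real.exp (-b * r) * L r) ≤ 4 * Real.pi := by
    have : (4 / t) * Real.exp (-b * 0) * L 0 = 0 := by rw [hL0]; ring
    linarith [hstar']
  set I := ∫ r in (0:ℝ)..t, Real.exp (-b * r) * L r with hI
  have hkey2 : 3 * I ≤ 4 * Real.pi * t ^ 2 := by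
    rw [div_mul_eq_mul_div, div_le_iff₀ ht2] at key
    linarith [key]
  -- Monotone comparison
  have hmono : (∫ r in (0:ℝ)..t, L r) ≤
      ∫ r in (0:ℝ)..t, Real.exp (b * t) * (Real.exp (-b * r) * L r) := by
    apply intervalIntegral.integral_mono_on ht0.le hintL hint2
    intro r hr
    have hLr := hLnn' r hr
    have h1 : (1:ℝ) ≤ Real.exp (b * t) * Real.exp (-b * r) := by
      rw [← Real.exp_add]
      apply Real.one_le_exp
      nlinarith [hr.2]
    have hexp : 0 ≤ Real.exp (-b * r) := (Real.exp_pos _).le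
    nlinarith [mul_le_mul_of_nonneg_right h1 hLr]
  rw [intervalIntegral.integral_const_mul] at hmono
  have hIpos : 0 ≤ Real.exp (b * t) := (Real.exp_pos _).le
  calc (∫ r in (0:ℝ)..t, L r) ≤ Real.exp (b * t) * I := hmono
    _ ≤ Real.exp (b * t) * (4 * Real.pi * t ^ 2 / 3) := by
        apply mul_le_mul_of_nonneg_left _ hIpos
        linarith
    _ = (4 * Real.pi / 3) * t ^ 2 * Real.exp (b * t) := by ring
end

section
/- For every b > 0 there exists a constant Λ > 0, depending only on b, with the following property: for every R > 0 and every continuous nonnegative function L : [0,R) → ℝ with L(0) = 0 satisfying hypothesis (★_b) on [0,R), and for all τ, s with 0 < 2τ ≤ s and s < R − 3τ, one has ∫_{s−τ}^{s} e^{−br}·L(r) dr ≤ Λ·τ + (Λ/τ)·∫_{s−2τ}^{s−τ} e^{−br}·L(r) dr. -/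
open Real MeasureTheory intervalIntegral Set

section Subinterval

variable {f : ℝ → ℝ} {u c d t : ℝ}

theorem integral_le_integral_of_subinterval (huc : u ≤ c) (hcd : c ≤ d) (hdt : d ≤ t)
    (hf : ContinuousOn f (Icc u t)) (hf0 : ∀ x ∈ Icc u t, 0 ≤ f x) :
    ∫ r in c..d, f r ≤ ∫ r in u..t, f r :=
  integral_mono_interval huc hcd hdt
    ((ae_restrict_iff' measurableSet_Ioc).2 <|
      ae_of_all _ fun x hx => hf0 x (Ioc_subset_Icc_self hx))
    (hf.intervalIntegrable_of_Icc (huc.trans (hcd.trans hdt)))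

theorem mul_integral_le_integral_sub_mul (huc : u ≤ c) (hcd : c ≤ d) (hdt : d ≤ t)
    (hf : ContinuousOn f (Icc u t)) (hf0 : ∀ x ∈ Icc u t, 0 ≤ f x) :
    (t - d) * ∫ r in c..d, f r ≤ ∫ r in u..t, (t - r) * f r := by
  have hf_cd : ContinuousOn f (Icc c d) := hf.mono (Icc_subset_Icc huc hdt)
  have hg : ContinuousOn (fun r => (t - r) * f r) (Icc u t) := by fun_prop
  calc (t - d) * ∫ r in c..d, f r = ∫ r in c..d, (t - d) * f r :=
        (intervalIntegral.integral_const_mul _ _).symm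
    _ ≤ ∫ r in c..d, (t - r) * f r :=
      integral_mono_on hcd ((by fun_prop : ContinuousOn _ _).intervalIntegrable_of_Icc hcd)
        ((by fun_prop : ContinuousOn _ _).intervalIntegrable_of_Icc hcd)
        fun x hx => mul_le_mul_of_nonneg_right (by linarith [hx.2])
          (hf0 x ⟨huc.trans hx.1, hx.2.trans hdt⟩)
    _ ≤ ∫ r in u..t, (t - r) * f r :=
      integral_le_integral_of_subinterval huc hcd hdt hg
        fun x hx => mul_nonneg (sub_nonneg.2 hx.2) (hf0 x hx)

end Subinterval

namespace StarHyp

variable {b R : ℝ} {L : ℝ → ℝ}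

theorem mul_integral_le (hstar : StarHyp b R L) (hb : 0 ≤ b)
    (hL : ContinuousOn L (Ico 0 R)) (hL0 : ∀ r ∈ Ico 0 R, 0 ≤ L r)
    {η t c d : ℝ} (hη : 0 < η) (hηt : η ≤ t) (htR : t < R)
    (hc : t - η ≤ c) (hcd : c ≤ d) (hd : d ≤ t) :
    (3 + 7 * b * (t - d)) * ∫ r in c..d, exp (-b * r) * L r
      ≤ 4 * π * η ^ 2 + 4 * η * (exp (-b * (t - η)) * L (t - η)) := by
  have hsub : Icc (t - η) t ⊆ Ico 0 R := fun x hx => ⟨by linarith [hx.1], hx.2.trans_lt htR⟩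
  have hf : ContinuousOn (fun r => exp (-b * r) * L r) (Icc (t - η) t) := by
    have := hL.mono hsub
    fun_prop
  have hf0 : ∀ x ∈ Icc (t - η) t, 0 ≤ exp (-b * x) * L x :=
    fun x hx => mul_nonneg (exp_pos _).le (hL0 x (hsub hx))
  have h_int := integral_le_integral_of_subinterval hc hcd hd hf hf0
  have h_wint := mul_integral_le_integral_sub_mul hc hcd hd hf hf0
  simp_rw [← mul_assoc] at h_wint
  have h_star : 3 * (∫ r in (t - η)..t, exp (-b * r) * L r)
      + 7 * b * ∫ r in (t - η)..t, (t - r) * exp (-b * r) * L r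
      ≤ 4 * π * η ^ 2 + 4 * η * (exp (-b * (t - η)) * L (t - η)) := by
    have hη0 : η ≠ 0 := hη.ne'
    calc _ = η ^ 2 * ((3 / η ^ 2) * (∫ r in (t - η)..t, exp (-b * r) * L r)
          + (7 * b / η ^ 2) * ∫ r in (t - η)..t, (t - r) * exp (-b * r) * L r) := by
          field_simp
      _ ≤ η ^ 2 * (4 * π + (4 / η) * exp (-b * (t - η)) * L (t - η)) :=
          mul_le_mul_of_nonneg_left (hstar η t hη hηt htR) (sq_nonneg η)
      _ = _ := by
          field_simp
  nlinarith [mul_le_mul_of_nonneg_left h_wint (by positivity : (0 : ℝ) ≤ 7 * b)]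

theorem mul_integral_le_integral_preceding (hstar : StarHyp b R L) (hb : 0 ≤ b)
    (hL : ContinuousOn L (Ico 0 R)) (hL0 : ∀ r ∈ Ico 0 R, 0 ≤ L r)
    {τ s : ℝ} (hτ : 0 < τ) (hs : 2 * τ ≤ s) (hsR : s + 3 * τ < R) :
    21 * b * τ * ∫ r in (s - τ)..s, exp (-b * r) * L r
      ≤ 100 * π * τ ^ 2 + 20 * ∫ r in (s - 2 * τ)..(s - τ), exp (-b * r) * L r := by
  set I := ∫ r in (s - τ)..s, exp (-b * r) * L r
  have hI : 0 ≤ I := integral_nonneg (by linarith) fun x hx =>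
    mul_nonneg (exp_pos _).le (hL0 x ⟨by linarith [hx.1], by linarith [hx.2]⟩)
  have pointwise : ∀ u ∈ Icc (s - 2 * τ) (s - τ),
      21 * b * τ * I - 100 * π * τ ^ 2 ≤ 20 * τ * (exp (-b * u) * L u) := by
    intro u hu
    have hfu : 0 ≤ exp (-b * u) * L u :=
      mul_nonneg (exp_pos _).le (hL0 u ⟨by linarith [hu.1], by linarith [hu.2]⟩)
    have h := hstar.mul_integral_le hb hL hL0 (η := s + 3 * τ - u) (t := s + 3 * τ)
      (c := s - τ) (d := s) (by linarith [hu.2]) (by linarith [hu.1]) hsR (by linarith [hu.2])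
      (by linarith) (by linarith)
    rw [sub_sub_cancel, show s + 3 * τ - s = 3 * τ by ring] at h
    have hη : (s + 3 * τ - u) ^ 2 ≤ (5 * τ) ^ 2 :=
      pow_le_pow_left₀ (by linarith [hu.2]) (by linarith [hu.1]) 2
    nlinarith [mul_le_mul_of_nonneg_left hη pi_pos.le,
      mul_le_mul_of_nonneg_right (by linarith [hu.1] : s + 3 * τ - u ≤ 5 * τ) hfu]
  have hf : ContinuousOn (fun r => exp (-b * r) * L r) (Icc (s - 2 * τ) (s - τ)) := by
    have := hL.mono fun x (hx : x ∈ Icc (s - 2 * τ) (s - τ)) =>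
      (⟨by linarith [hx.1], by linarith [hx.2]⟩ : x ∈ Ico 0 R)
    fun_prop
  have hg : ContinuousOn (fun r => 20 * τ * (exp (-b * r) * L r)) (Icc (s - 2 * τ) (s - τ)) := by
    fun_prop
  have h_avg := integral_mono_on (by linarith) (intervalIntegrable_const (μ := volume))
    (hg.intervalIntegrable_of_Icc (by linarith)) pointwise
  rw [intervalIntegral.integral_const, intervalIntegral.integral_const_mul, smul_eq_mul,
    show s - τ - (s - 2 * τ) = τ by ring] at h_avg
  nlinarith

end StarHyp

theorem stmt_6 (b : ℝ) (hb : 0 < b) :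
    ∃ Λ : ℝ, 0 < Λ ∧
      ∀ (R : ℝ) (L : ℝ → ℝ), 0 < R →
        ContinuousOn L (Set.Ico (0:ℝ) R) →
        (∀ r ∈ Set.Ico (0:ℝ) R, 0 ≤ L r) →
        L 0 = 0 →
        StarHyp b R L →
        ∀ τ s : ℝ, 0 < τ → 2 * τ ≤ s → s < R - 3 * τ →
          (∫ r in (s - τ)..s, Real.exp (-b * r) * L r)
            ≤ Λ * τ + (Λ / τ) * ∫ r in (s - 2 * τ)..(s - τ), Real.exp (-b * r) * L r := by
  refine ⟨5 * π / b, by positivity, ?_⟩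
  intro R L _ hL hL0 _ hstar τ s hτ hs hsR
  have h := hstar.mul_integral_le_integral_preceding hb.le hL hL0 hτ hs (by linarith)
  set I₁ := ∫ r in (s - 2 * τ)..(s - τ), exp (-b * r) * L r
  have hI₁ : 0 ≤ I₁ := integral_nonneg (by linarith) fun x hx =>
    mul_nonneg (exp_pos _).le (hL0 x ⟨by linarith [hx.1], by linarith [hx.2]⟩)
  rw [show 5 * π / b * τ + 5 * π / b / τ * I₁ = (5 * π * τ ^ 2 + 5 * π * I₁) / (b * τ) by
    field_simp, le_div_iff₀ (by positivity)]
  nlinarith [pi_gt_three]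
end

section
/- For every b > 0 there exists a constant C > 0, depending only on b, with the following property: for every R > 0 and every continuous nonnegative function L : [0,R) → ℝ with L(0) = 0 satisfying hypothesis (★_b) on [0,R), one has ∫₀^t L(r) dr ≤ C·e^{bt} for all t ∈ (0,R). -/
/-!
Put `g r = e^{-br} L r`, extended by zero to the left of `0`, and let `W t = ∫_{t-h}^t g` with
`h = 3/b`. Taking `η = t` in (★) gives `∫_0^s g ≤ 4πs²/3`. Averaging (★) over `η ∈ [2h, 3h]`
gives the contraction `W s ≤ 19πh²/18 + W (s - h) / 2`, hence `W ≤ 12πh²` away from the top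
window, and averaging over `η ∈ [h, 2h]` bounds the top window too: `W ≤ K = 316πh²/9`.
Finally `∫_0^t L = ∫_0^t e^{br} g ≤ e^{-bh} C e^{bt} + e^{bt} K` by induction over steps of
length `h`, which closes with `C = K / (1 - e^{-3})`.
-/

open Real MeasureTheory intervalIntegral Set

theorem forall_of_forall_le_of_sub_imp {P : ℝ → Prop} {a h : ℝ} (hh : 0 < h)
    (base : ∀ x ≤ a, P x) (step : ∀ x, a < x → P (x - h) → P x) (x : ℝ) : P x := by
  have key : ∀ n : ℕ, ∀ x ≤ a + n * h, P x := by
    intro n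
    induction n with
    | zero => simpa using base
    | succ n ih =>
      intro x hx
      rcases le_or_gt x a with hxa | hxa
      · exact base x hxa
      · exact step x hxa (ih _ (by push_cast at hx; linarith))
  obtain ⟨n, hn⟩ := exists_nat_ge ((x - a) / h)
  exact key n x (by rw [div_le_iff₀ hh] at hn; linarith)

theorem exists_continuous_extension_of_continuousOn_Ico {L : ℝ → ℝ} {R T : ℝ}
    (hLc : ContinuousOn L (Ico 0 R)) (hLnn : ∀ r ∈ Ico 0 R, 0 ≤ L r) (hL0 : L 0 = 0)
    (hT0 : 0 ≤ T) (hTR : T < R) :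
    ∃ M : ℝ → ℝ, Continuous M ∧ (∀ r, 0 ≤ M r) ∧ (∀ r ≤ 0, M r = 0) ∧
      ∀ r ∈ Icc 0 T, M r = L r := by
  have hsub : Icc 0 T ⊆ Ico 0 R := Icc_subset_Ico_right hTR
  refine ⟨IccExtend hT0 ((Icc 0 T).domRestrict L),
    continuous_IccExtend_iff.mpr (hLc.mono hsub).domRestrict, fun r => ?_, fun r hr => ?_,
    fun r hr => IccExtend_of_mem hT0 _ hr⟩
  · rw [IccExtend_apply]
    exact hLnn _ (hsub (projIcc 0 T hT0 r).2)
  · rw [IccExtend_of_le_left hT0 _ hr]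
    exact hL0

/-- (★_b) for `g r = e^{-br} L r`, multiplied by `η²`. -/
def StarIneq (b T : ℝ) (g : ℝ → ℝ) : Prop :=
  ∀ η t : ℝ, 0 < η → η ≤ t → t ≤ T →
    3 * (∫ r in (t - η)..t, g r) + 7 * b * ∫ r in (t - η)..t, (t - r) * g r
      ≤ 4 * π * η ^ 2 + 4 * η * g (t - η)

theorem StarHyp.starIneq {b R T : ℝ} {L g : ℝ → ℝ} (hS : StarHyp b R L) (hTR : T < R)
    (hgL : ∀ r ∈ Icc 0 T, g r = exp (-b * r) * L r) : StarIneq b T g := by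
  intro η t hη hηt htT
  have hgL' : ∀ r ∈ uIcc (t - η) t, g r = exp (-b * r) * L r := fun r hr => by
    rw [uIcc_of_le (by linarith)] at hr
    exact hgL r ⟨by linarith [hr.1], by linarith [hr.2]⟩
  have hI : ∫ r in (t - η)..t, g r = ∫ r in (t - η)..t, exp (-b * r) * L r :=
    integral_congr hgL'
  have hJ : ∫ r in (t - η)..t, (t - r) * g r = ∫ r in (t - η)..t, (t - r) * exp (-b * r) * L r :=
    integral_congr fun r hr => by rw [hgL' r hr, mul_assoc]
  have hS' := hS η t hη hηt (by linarith)
  rw [← hI, ← hJ, mul_assoc _ (exp _), ← hgL' (t - η) left_mem_uIcc] at hS'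
  calc 3 * (∫ r in (t - η)..t, g r) + 7 * b * ∫ r in (t - η)..t, (t - r) * g r
      = η ^ 2 * (3 / η ^ 2 * (∫ r in (t - η)..t, g r)
          + 7 * b / η ^ 2 * ∫ r in (t - η)..t, (t - r) * g r) := by
        field_simp
    _ ≤ η ^ 2 * (4 * π + 4 / η * g (t - η)) := mul_le_mul_of_nonneg_left hS' (sq_nonneg η)
    _ = 4 * π * η ^ 2 + 4 * η * g (t - η) := by field_simp

noncomputable def window (g : ℝ → ℝ) (h t : ℝ) : ℝ := ∫ r in (t - h)..t, g r

section WindowBounds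

variable {b h T : ℝ} {g : ℝ → ℝ}

theorem window_le_integral_zero (hg : Continuous g) (hg0 : ∀ r, 0 ≤ g r)
    (hgneg : ∀ r ≤ 0, g r = 0) (hh : 0 ≤ h) (s : ℝ) :
    window g h s ≤ ∫ r in (0 : ℝ)..s, g r := by
  have hzero : ∫ r in (min (s - h) 0)..0, g r = 0 := by
    rw [integral_congr (g := fun _ => (0 : ℝ)) fun r hr => hgneg r ?_,
      intervalIntegral.integral_zero]
    rw [uIcc_of_le (min_le_right _ _)] at hr
    exact hr.2
  calc window g h s ≤ ∫ r in (min (s - h) 0)..s, g r :=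
        integral_mono_interval (min_le_left _ _) (by linarith) le_rfl
          (ae_of_all _ hg0) (hg.intervalIntegrable _ _)
    _ = ∫ r in (0 : ℝ)..s, g r := by
        rw [← integral_add_adjacent_intervals (hg.intervalIntegrable _ 0)
          (hg.intervalIntegrable 0 s), hzero, zero_add]

theorem StarIneq.integral_le_sq (hS : StarIneq b T g) (hb : 0 ≤ b) (hg0 : ∀ r, 0 ≤ g r)
    (hgz : g 0 = 0) {s : ℝ} (hs : 0 < s) (hsT : s ≤ T) :
    ∫ r in (0 : ℝ)..s, g r ≤ 4 * π / 3 * s ^ 2 := by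
  have hstar := hS s s hs le_rfl hsT
  rw [sub_self, hgz, mul_zero, add_zero] at hstar
  have hJ : 0 ≤ ∫ r in (0 : ℝ)..s, (s - r) * g r :=
    integral_nonneg hs.le fun r hr => mul_nonneg (by linarith [hr.2]) (hg0 r)
  nlinarith

theorem StarIneq.window_le_sq (hS : StarIneq b T g) (hb : 0 ≤ b) (hg : Continuous g)
    (hg0 : ∀ r, 0 ≤ g r) (hgneg : ∀ r ≤ 0, g r = 0) (hh : 0 ≤ h) {s : ℝ} (hs : 0 ≤ s)
    (hsT : s ≤ T) : window g h s ≤ 4 * π / 3 * s ^ 2 := by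
  refine (window_le_integral_zero hg hg0 hgneg hh s).trans ?_
  rcases hs.eq_or_lt with rfl | hs
  · simp
  · exact hS.integral_le_sq hb hg0 (hgneg 0 le_rfl) hs hsT

/-- The term `g (t - η)` of (★) has no pointwise bound, so (★) is averaged over `η ∈ [p, q]`,
where that term becomes an integral of `g`. -/
theorem StarIneq.average (hS : StarIneq b T g) (hb : 0 ≤ b) (hg : Continuous g)
    (hg0 : ∀ r, 0 ≤ g r) {p q t : ℝ} (hp : 0 < p) (hpq : p ≤ q) (hqt : q ≤ t) (htT : t ≤ T) :
    (q - p) * (3 * (∫ r in (t - p)..t, g r) + 7 * b * ∫ r in (t - p)..t, (t - r) * g r)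
      ≤ 4 * π * (q ^ 3 - p ^ 3) / 3 + 4 * q * ∫ r in (t - q)..(t - p), g r := by
  have hpt : ∀ η ∈ Icc p q,
      3 * (∫ r in (t - p)..t, g r) + 7 * b * ∫ r in (t - p)..t, (t - r) * g r
        ≤ 4 * π * η ^ 2 + 4 * q * g (t - η) := by
    rintro η ⟨hpη, hηq⟩
    have hI : ∫ r in (t - p)..t, g r ≤ ∫ r in (t - η)..t, g r :=
      integral_mono_interval (by linarith) (by linarith) le_rfl (ae_of_all _ hg0)
        (hg.intervalIntegrable _ _)
    have hJ : ∫ r in (t - p)..t, (t - r) * g r ≤ ∫ r in (t - η)..t, (t - r) * g r :=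
      integral_mono_interval (by linarith) (by linarith) le_rfl
        (ae_restrict_of_forall_mem measurableSet_Ioc fun r hr =>
          mul_nonneg (by linarith [hr.2]) (hg0 r))
        ((by fun_prop : Continuous fun r => (t - r) * g r).intervalIntegrable _ _)
    have hη := hS η t (by linarith) (by linarith) htT
    have hgη : 4 * η * g (t - η) ≤ 4 * q * g (t - η) :=
      mul_le_mul_of_nonneg_right (by linarith) (hg0 _)
    nlinarith
  have hint := integral_mono_on hpq (intervalIntegrable_const (μ := volume))
    ((by fun_prop : Continuous fun η => 4 * π * η ^ 2 + 4 * q * g (t - η)).intervalIntegrable _ _)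
    hpt
  rw [intervalIntegral.integral_const, smul_eq_mul,
    intervalIntegral.integral_add
      ((by fun_prop : Continuous fun η => 4 * π * η ^ 2).intervalIntegrable _ _)
      ((by fun_prop : Continuous fun η => 4 * q * g (t - η)).intervalIntegrable _ _),
    intervalIntegral.integral_const_mul, integral_pow, intervalIntegral.integral_const_mul,
    integral_comp_sub_left] at hint
  linarith

theorem StarIneq.window_le_add_window_sub (hS : StarIneq b T g) (hb : 0 ≤ b)
    (hg : Continuous g) (hg0 : ∀ r, 0 ≤ g r) (hh : 0 < h) {t : ℝ} (ht : 2 * h ≤ t)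
    (htT : t ≤ T) : window g h t ≤ 28 * π / 9 * h ^ 2 + 8 / 3 * window g h (t - h) := by
  have havg := hS.average hb hg hg0 hh (by linarith : h ≤ 2 * h) ht htT
  have hJ : 0 ≤ ∫ r in (t - h)..t, (t - r) * g r :=
    integral_nonneg (by linarith) fun r hr => mul_nonneg (by linarith [hr.2]) (hg0 r)
  rw [show t - 2 * h = t - h - h by ring] at havg
  unfold window
  have : h * (3 * ∫ r in (t - h)..t, g r)
      ≤ h * (28 * π / 3 * h ^ 2 + 8 * ∫ r in (t - h - h)..(t - h), g r) := by
    nlinarith [mul_nonneg (mul_nonneg hh.le hb) hJ]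
  nlinarith [(mul_le_mul_iff_right₀ hh).mp this]

theorem StarIneq.window_le_add_half_window_sub (hS : StarIneq b T g) (hb : 0 ≤ b)
    (hbh : b * h = 3) (hg : Continuous g) (hg0 : ∀ r, 0 ≤ g r) (hh : 0 < h) {s : ℝ} (hs : 2 * h ≤ s)
    (hsT : s + h ≤ T) : window g h s ≤ 19 * π / 18 * h ^ 2 + window g h (s - h) / 2 := by
  have havg := hS.average hb hg hg0 (by linarith : 0 < 2 * h) (by linarith : 2 * h ≤ 3 * h)
    (by linarith) hsT
  rw [show s + h - 2 * h = s - h by ring, show s + h - 3 * h = s - h - h by ring] at havg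
  have hI : window g h s ≤ ∫ r in (s - h)..(s + h), g r :=
    integral_mono_interval le_rfl (by linarith) (by linarith) (ae_of_all _ hg0)
      (hg.intervalIntegrable _ _)
  have hJ : h * window g h s ≤ ∫ r in (s - h)..(s + h), (s + h - r) * g r := by
    have hcont : Continuous fun r => (s + h - r) * g r := by fun_prop
    calc h * window g h s = ∫ r in (s - h)..s, h * g r :=
        (intervalIntegral.integral_const_mul _ _).symm
      _ ≤ ∫ r in (s - h)..s, (s + h - r) * g r :=
        integral_mono_on (by linarith) ((hg.intervalIntegrable _ _).const_mul _)
          (hcont.intervalIntegrable _ _) fun r hr =>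
            mul_le_mul_of_nonneg_right (by linarith [hr.2]) (hg0 r)
      _ ≤ ∫ r in (s - h)..(s + h), (s + h - r) * g r :=
        integral_mono_interval le_rfl (by linarith) (by linarith)
          (ae_restrict_of_forall_mem measurableSet_Ioc fun r hr =>
            mul_nonneg (by linarith [hr.2]) (hg0 r))
          (hcont.intervalIntegrable _ _)
  have : h * (24 * window g h s) ≤ h * (76 * π / 3 * h ^ 2 + 12 * window g h (s - h)) := by
    have hbhW : 7 * b * h * (h * window g h s) = 21 * (h * window g h s) := by
      linear_combination 7 * h * window g h s * hbh
    unfold window at *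
    nlinarith [mul_le_mul_of_nonneg_left hI hh.le,
      mul_le_mul_of_nonneg_left hJ (by positivity : 0 ≤ 7 * b * h)]
  nlinarith [(mul_le_mul_iff_right₀ hh).mp this]

theorem StarIneq.window_le_of_add_le (hS : StarIneq b T g) (hb : 0 ≤ b) (hbh : b * h = 3)
    (hg : Continuous g) (hg0 : ∀ r, 0 ≤ g r) (hgneg : ∀ r ≤ 0, g r = 0) (hh : 0 < h) :
    ∀ s, 0 ≤ s → s + h ≤ T → window g h s ≤ 12 * π * h ^ 2 := by
  refine forall_of_forall_le_of_sub_imp hh (a := 3 * h) (fun s hs3 hs hsT => ?_)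
    fun s hs3 hprev hs hsT => ?_
  · calc window g h s ≤ 4 * π / 3 * s ^ 2 :=
          hS.window_le_sq hb hg hg0 hgneg hh.le hs (by linarith)
      _ ≤ 4 * π / 3 * (3 * h) ^ 2 := by gcongr
      _ = 12 * π * h ^ 2 := by ring
  · have := hS.window_le_add_half_window_sub hb hbh hg hg0 hh (by linarith) hsT
    have := hprev (by linarith) (by linarith)
    nlinarith [pi_pos]

theorem StarIneq.window_le (hS : StarIneq b T g) (hb : 0 ≤ b) (hbh : b * h = 3)
    (hg : Continuous g) (hg0 : ∀ r, 0 ≤ g r) (hgneg : ∀ r ≤ 0, g r = 0) (hh : 0 < h)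
    {t : ℝ} (ht : 0 ≤ t) (htT : t ≤ T) : window g h t ≤ 316 * π / 9 * h ^ 2 := by
  rcases le_or_gt t (2 * h) with ht2 | ht2
  · calc window g h t ≤ 4 * π / 3 * t ^ 2 := hS.window_le_sq hb hg hg0 hgneg hh.le ht htT
      _ ≤ 4 * π / 3 * (2 * h) ^ 2 := by gcongr
      _ ≤ 316 * π / 9 * h ^ 2 := by nlinarith [pi_pos]
  · have := hS.window_le_add_window_sub hb hg hg0 hh ht2.le htT
    have := hS.window_le_of_add_le hb hbh hg hg0 hgneg hh (t - h) (by linarith) (by linarith)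
    nlinarith [pi_pos]

end WindowBounds

theorem integral_exp_mul_le_of_window_le {b h T K : ℝ} {g : ℝ → ℝ} (hb : 0 < b) (hh : 0 < h)
    (hg : Continuous g) (hg0 : ∀ r, 0 ≤ g r) (hK : 0 ≤ K)
    (hW : ∀ x, 0 < x → x ≤ T → window g h x ≤ K) :
    ∀ x ≤ T, ∫ r in (0 : ℝ)..x, exp (b * r) * g r ≤ K / (1 - exp (-(b * h))) * exp (b * x) := by
  set C := K / (1 - exp (-(b * h)))
  have hexp : exp (-(b * h)) < 1 := Real.exp_lt_one_iff.mpr (by nlinarith)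
  have hC0 : 0 ≤ C := div_nonneg hK (by linarith)
  have hC : C * exp (-(b * h)) + K = C := by
    linear_combination -div_mul_cancel₀ K (by linarith : 1 - exp (-(b * h)) ≠ 0)
  have hf : Continuous fun r => exp (b * r) * g r := by fun_prop
  refine forall_of_forall_le_of_sub_imp hh (a := 0) (fun x hx _ => ?_) fun x hx hprev hxT => ?_
  · rw [integral_symm]
    have := intervalIntegral.integral_nonneg (μ := volume) hx fun r _ =>
      mul_nonneg (exp_pos (b * r)).le (hg0 r)
    have := mul_nonneg hC0 (exp_pos (b * x)).le
    linarith
  · calc ∫ r in (0 : ℝ)..x, exp (b * r) * g r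
        = (∫ r in (0 : ℝ)..(x - h), exp (b * r) * g r) + ∫ r in (x - h)..x, exp (b * r) * g r :=
          (integral_add_adjacent_intervals (hf.intervalIntegrable _ _)
            (hf.intervalIntegrable _ _)).symm
      _ ≤ C * exp (b * (x - h)) + ∫ r in (x - h)..x, exp (b * x) * g r := by
          gcongr ?_ + ?_
          · exact hprev (by linarith)
          · exact integral_mono_on (by linarith) (hf.intervalIntegrable _ _)
              ((hg.intervalIntegrable _ _).const_mul _) fun r hr =>
                mul_le_mul_of_nonneg_right (exp_le_exp.mpr (by nlinarith [hr.2])) (hg0 r)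
      _ = C * exp (b * (x - h)) + exp (b * x) * window g h x := by
          rw [intervalIntegral.integral_const_mul, window]
      _ ≤ C * exp (b * (x - h)) + exp (b * x) * K := by
          gcongr
          exact hW x hx hxT
      _ = exp (b * x) * (C * exp (-(b * h)) + K) := by
          rw [show b * (x - h) = b * x + -(b * h) by ring, exp_add]
          ring
      _ = C * exp (b * x) := by rw [hC, mul_comm]

theorem stmt_7 (b : ℝ) (hb : 0 < b) :
    ∃ C : ℝ, 0 < C ∧
      ∀ (R : ℝ) (L : ℝ → ℝ), 0 < R →
        ContinuousOn L (Set.Ico (0:ℝ) R) →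
        (∀ r ∈ Set.Ico (0:ℝ) R, 0 ≤ L r) →
        L 0 = 0 →
        StarHyp b R L →
        ∀ t ∈ Set.Ioo (0:ℝ) R,
          (∫ r in (0:ℝ)..t, L r) ≤ C * Real.exp (b * t) := by
  set h := 3 / b
  have hh : 0 < h := by positivity
  have hbh : b * h = 3 := mul_div_cancel₀ 3 hb.ne'
  have hexp : exp (-(b * h)) < 1 := Real.exp_lt_one_iff.mpr (by linarith)
  refine ⟨316 * π / 9 * h ^ 2 / (1 - exp (-(b * h))), div_pos (by positivity) (by linarith), ?_⟩
  rintro R L - hLc hLnn hL0 hstar t ⟨ht0, htR⟩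
  obtain ⟨M, hM, hM0, hMneg, hML⟩ :=
    exists_continuous_extension_of_continuousOn_Ico hLc hLnn hL0 ht0.le htR
  set g := fun r => exp (-b * r) * M r
  have hg : Continuous g := by fun_prop
  have hg0 : ∀ r, 0 ≤ g r := fun r => mul_nonneg (exp_pos _).le (hM0 r)
  have hgneg : ∀ r ≤ 0, g r = 0 := fun r hr => by simp [g, hMneg r hr]
  have hS : StarIneq b t g := hstar.starIneq htR fun r hr => by simp [g, hML r hr]
  calc ∫ r in (0 : ℝ)..t, L r = ∫ r in (0 : ℝ)..t, exp (b * r) * g r :=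
        integral_congr fun r hr => by
          rw [uIcc_of_le ht0.le] at hr
          simp [g, hML r hr, ← mul_assoc, ← exp_add]
    _ ≤ _ := integral_exp_mul_le_of_window_le hb hh hg hg0 (by positivity)
        (fun x hx hxt => hS.window_le hb.le hbh hg hg0 hgneg hh hx.le hxt) t le_rfl
end

section
/- Let R > 0, a > 0, and let L : [0,R) → ℝ be a continuous nonnegative function with L(0) = 0 satisfying hypothesis (★′_a) on [0,R). Then for every t ∈ (0,R), ∫₀^t e^{−2ar}·L(r) dr ≤ 2π·t², and consequently ∫₀^t L(r) dr ≤ 2π·t²·e^{2at}. -/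
open Real MeasureTheory intervalIntegral Set

/-- Hypothesis (★′_a): for all `η, t` with `0 < η ≤ t < R`,
`(1/η²)·∫_{t−η}^{t} e^{−2ar}·L(r) dr + (6a/η²)·∫_{t−η}^{t} (t−r)·e^{−2ar}·L(r) dr
  ≤ 2π + (2/η)·e^{−2a(t−η)}·L(t−η)`. -/
def StarHyp' (a R : ℝ) (L : ℝ → ℝ) : Prop :=
  ∀ η t : ℝ, 0 < η → η ≤ t → t < R →
    (1 / η ^ 2) * (∫ r in (t - η)..t, Real.exp (-2 * a * r) * L r)
      + (6 * a / η ^ 2) * (∫ r in (t - η)..t, (t - r) * Real.exp (-2 * a * r) * L r)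
    ≤ 2 * Real.pi + (2 / η) * Real.exp (-2 * a * (t - η)) * L (t - η)

theorem stmt_8 (R a : ℝ) (hR : 0 < R) (ha : 0 < a)
    (L : ℝ → ℝ) (hLcont : ContinuousOn L (Set.Ico (0:ℝ) R))
    (hLnn : ∀ r ∈ Set.Ico (0:ℝ) R, 0 ≤ L r)
    (hL0 : L 0 = 0)
    (hstar : StarHyp' a R L) :
    ∀ t ∈ Set.Ioo (0:ℝ) R,
      (∫ r in (0:ℝ)..t, Real.exp (-2 * a * r) * L r) ≤ 2 * Real.pi * t ^ 2 ∧
      (∫ r in (0:ℝ)..t, L r) ≤ 2 * Real.pi * t ^ 2 * Real.exp (2 * a * t) := by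
  intro t ht
  obtain ⟨ht0, htR⟩ := ht
  have ht2 : (0:ℝ) < t ^ 2 := by positivity
  have hsub : Set.Icc (0:ℝ) t ⊆ Set.Ico 0 R := fun x hx => ⟨hx.1, lt_of_le_of_lt hx.2 htR⟩
  have hLc : ContinuousOn L (Set.Icc (0:ℝ) t) := hLcont.mono hsub
  have hec : Continuous fun r : ℝ => Real.exp (-2 * a * r) := by continuity
  have hint1 : IntervalIntegrable (fun r => Real.exp (-2 * a * r) * L r) volume 0 t := by
    apply ContinuousOn.intervalIntegrable
    rw [Set.uIcc_of_le ht0.le]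
    exact hec.continuousOn.mul hLc
  have hint2 : IntervalIntegrable (fun r => (t - r) * Real.exp (-2 * a * r) * L r) volume 0 t := by
    apply ContinuousOn.intervalIntegrable
    rw [Set.uIcc_of_le ht0.le]
    exact (((continuous_const.sub continuous_id).mul hec).continuousOn).mul hLc
  have hintL : IntervalIntegrable L volume 0 t := by
    apply ContinuousOn.intervalIntegrable
    rw [Set.uIcc_of_le ht0.le]; exact hLc
  have hnn : ∀ r ∈ Set.Icc (0:ℝ) t, 0 ≤ Real.exp (-2 * a * r) * L r := by
    intro r hr
    exact mul_nonneg (Real.exp_nonneg _) (hLnn r (hsub hr))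
  have hnn2 : 0 ≤ ∫ r in (0:ℝ)..t, (t - r) * Real.exp (-2 * a * r) * L r := by
    apply intervalIntegral.integral_nonneg ht0.le
    intro r hr
    exact mul_nonneg (mul_nonneg (by linarith [hr.2]) (Real.exp_nonneg _)) (hLnn r (hsub hr))
  have key := hstar t t ht0 le_rfl htR
  rw [sub_self, hL0, mul_zero, add_zero] at key
  have h1 : (1 / t ^ 2) * (∫ r in (0:ℝ)..t, Real.exp (-2 * a * r) * L r) ≤ 2 * Real.pi := by
    have h6 : 0 ≤ 6 * a / t ^ 2 := by positivity
    nlinarith [mul_nonneg h6 hnn2]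
  have hI1 : (∫ r in (0:ℝ)..t, Real.exp (-2 * a * r) * L r) ≤ 2 * Real.pi * t ^ 2 := by
    rw [one_div, inv_mul_le_iff₀ ht2] at h1
    linarith
  refine ⟨hI1, ?_⟩
  have hmono : (∫ r in (0:ℝ)..t, L r)
      ≤ ∫ r in (0:ℝ)..t, Real.exp (2 * a * t) * (Real.exp (-2 * a * r) * L r) := by
    apply intervalIntegral.integral_mono_on ht0.le hintL
    · exact (hint1.const_mul _)
    · intro r hr
      have h1' : (1:ℝ) ≤ Real.exp (2 * a * t) * Real.exp (-2 * a * r) := by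
        rw [← Real.exp_add]
        have : (0:ℝ) ≤ 2 * a * t + -2 * a * r := by nlinarith [hr.1, hr.2]
        calc (1:ℝ) = Real.exp 0 := (Real.exp_zero).symm
          _ ≤ _ := Real.exp_le_exp.mpr this
      have hLr : 0 ≤ L r := hLnn r (hsub hr)
      calc L r = 1 * L r := (one_mul _).symm
        _ ≤ (Real.exp (2 * a * t) * Real.exp (-2 * a * r)) * L r :=
            mul_le_mul_of_nonneg_right h1' hLr
        _ = Real.exp (2 * a * t) * (Real.exp (-2 * a * r) * L r) := by ring
  rw [intervalIntegral.integral_const_mul] at hmono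
  calc (∫ r in (0:ℝ)..t, L r)
      ≤ Real.exp (2 * a * t) * ∫ r in (0:ℝ)..t, Real.exp (-2 * a * r) * L r := hmono
    _ ≤ Real.exp (2 * a * t) * (2 * Real.pi * t ^ 2) := by
        exact mul_le_mul_of_nonneg_left hI1 (Real.exp_nonneg _)
    _ = 2 * Real.pi * t ^ 2 * Real.exp (2 * a * t) := by ring
end

section
/- For every a > 0 there exists a constant C > 0, depending only on a, with the following property: for every R > 0 and every continuous nonnegative function L : [0,R) → ℝ with L(0) = 0 satisfying hypothesis (★′_a) on [0,R), one has ∫₀^t L(r) dr ≤ C·e^{2at} for all t ∈ (0,R). -/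
open Real MeasureTheory intervalIntegral Set

/-!
With the damped density `g(r) = e^{-2ar} L(r)` one has `∫₀ᵗ L = ∫₀ᵗ e^{2ar} g`, so it suffices to
bound the mass of `g` on every window of length `h = 1/a` by a multiple of `h²`: summing over
consecutive windows ending at `t` then gives a geometric series of ratio `e^{-2}`.
For the window bound, apply (★′_a) with `t - η ∈ [t - d, t - c]` a point where `g` equals its
mean over that interval, so that the boundary term is controlled by the mass of earlier windows.
With `(c, d) = (3h, 4h)` and the weight `6a(t - r) ≥ 12`, the mass of a window is at most
`(32πh² + 8·(previous window))/13`, which propagates the bound `18πh²` from the start (where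
`∫₀ˢ g ≤ 2πs²` by (★′_a) with `η = s`) up to distance `2h` from `R`; `(c, d) = (2h, 4h)` then
covers the last stretch.
-/

theorem forall_of_forall_le_of_step {P : ℝ → Prop} {b h : ℝ} (hh : 0 < h)
    (base : ∀ x ≤ b, P x) (step : ∀ x, b < x → P (x - h) → P x) (x : ℝ) : P x := by
  suffices ∀ n : ℕ, ∀ x ≤ b + n * h, P x by
    obtain ⟨n, hn⟩ := exists_nat_ge ((x - b) / h)
    exact this n x (by rw [div_le_iff₀ hh] at hn; linarith)
  intro n
  induction n with
  | zero => simpa using base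
  | succ n ih =>
    intro x hx
    rcases le_or_gt x b with hxb | hxb
    · exact base x hxb
    · exact step x hxb (ih _ (by push_cast at hx; linarith))

theorem integral_mono_interval_of_continuousOn {f : ℝ → ℝ} {c u v d : ℝ} (hcu : c ≤ u)
    (huv : u ≤ v) (hvd : v ≤ d) (hf : ContinuousOn f (Icc c d))
    (hf0 : ∀ x ∈ Icc c d, 0 ≤ f x) : ∫ x in u..v, f x ≤ ∫ x in c..d, f x :=
  integral_mono_interval hcu huv hvd
    ((ae_restrict_iff' measurableSet_Ioc).2 (ae_of_all _ fun x hx ↦ hf0 x (Ioc_subset_Icc_self hx)))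
    (hf.intervalIntegrable_of_Icc (by linarith))

theorem integral_exp_mul_le_exp_mul_integral {g : ℝ → ℝ} {k u v : ℝ} (hk : 0 ≤ k) (huv : u ≤ v)
    (hg : ContinuousOn g (Icc u v)) (hg0 : ∀ r ∈ Icc u v, 0 ≤ g r) :
    ∫ r in u..v, exp (k * r) * g r ≤ exp (k * v) * ∫ r in u..v, g r := by
  rw [← intervalIntegral.integral_const_mul]
  refine integral_mono_on huv ((ContinuousOn.mul (by fun_prop) hg).intervalIntegrable_of_Icc huv)
    ((continuousOn_const.mul hg).intervalIntegrable_of_Icc huv) fun r hr ↦ ?_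
  exact mul_le_mul_of_nonneg_right (exp_le_exp.2 (by nlinarith [hr.2])) (hg0 r hr)

theorem integral_exp_mul_le_of_forall_integral_le {g : ℝ → ℝ} {k h M T : ℝ} (hk : 0 < k)
    (hh : 0 < h) (hT : 0 ≤ T) (hg : ContinuousOn g (Icc 0 T)) (hg0 : ∀ r ∈ Icc 0 T, 0 ≤ g r)
    (hM : ∀ u v, 0 ≤ u → u ≤ v → v ≤ T → v - u ≤ h → ∫ r in u..v, g r ≤ M) :
    ∫ r in (0:ℝ)..T, exp (k * r) * g r ≤ M / (1 - exp (-(k * h))) * exp (k * T) := by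
  set q := exp (-(k * h))
  have hq : q < 1 := Real.exp_lt_one_iff.2 (by nlinarith)
  have hM0 : 0 ≤ M := by simpa using hM 0 0 le_rfl le_rfl hT (by linarith)
  have hsub {u v} (hu : 0 ≤ u) (huv : u ≤ v) (hv : v ≤ T) :
      ∫ r in u..v, exp (k * r) * g r ≤ exp (k * v) * ∫ r in u..v, g r :=
    integral_exp_mul_le_exp_mul_integral hk.le huv (hg.mono (Icc_subset_Icc hu hv))
      fun r hr ↦ hg0 r ⟨hu.trans hr.1, hr.2.trans hv⟩
  refine forall_of_forall_le_of_step (b := h) hh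
    (P := fun t ↦ t ∈ Icc 0 T → ∫ r in (0:ℝ)..t, exp (k * r) * g r ≤ M / (1 - q) * exp (k * t))
    ?_ ?_ T ⟨hT, le_rfl⟩
  · rintro t hth ⟨ht0, htT⟩
    calc ∫ r in (0:ℝ)..t, exp (k * r) * g r ≤ exp (k * t) * M :=
          (hsub le_rfl ht0 htT).trans (by gcongr; exact hM 0 t le_rfl ht0 htT (by linarith))
      _ ≤ M / (1 - q) * exp (k * t) := by
          rw [mul_comm]; gcongr
          exact le_div_self hM0 (by linarith) (by linarith [exp_pos (-(k * h))])
  · rintro t hth ih ⟨ht0, htT⟩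
    have hint {u v} (hu : 0 ≤ u) (huv : u ≤ v) (hv : v ≤ T) :
        IntervalIntegrable (fun r ↦ exp (k * r) * g r) volume u v :=
      (ContinuousOn.mul (by fun_prop) (hg.mono (Icc_subset_Icc hu hv))).intervalIntegrable_of_Icc
        huv
    have hexp : exp (k * (t - h)) = exp (k * t) * q := by rw [← exp_add]; ring_nf
    rw [← integral_add_adjacent_intervals (hint (u := 0) (v := t - h) le_rfl (by linarith)
      (by linarith)) (hint (u := t - h) (by linarith) (by linarith) htT)]
    calc _ ≤ M / (1 - q) * exp (k * (t - h)) + exp (k * t) * M :=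
          add_le_add (ih ⟨by linarith, by linarith⟩) ((hsub (by linarith) (by linarith) htT).trans
            (by gcongr; exact hM _ _ (by linarith) (by linarith) htT (by linarith)))
      _ = M / (1 - q) * exp (k * t) := by
          rw [hexp]; field_simp [(by linarith : (0:ℝ) < 1 - q).ne']; ring

/-- `(★′_a)` multiplied by `η²`, stated for the damped density `g(r) = e^{-2ar} L(r)`. -/
structure IsStarDensity (a R : ℝ) (g : ℝ → ℝ) : Prop where
  continuousOn : ContinuousOn g (Ico 0 R)
  nonneg : ∀ r ∈ Ico 0 R, 0 ≤ g r
  le : ∀ η t, 0 < η → η ≤ t → t < R →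
    (∫ r in (t - η)..t, g r) + 6 * a * ∫ r in (t - η)..t, (t - r) * g r
      ≤ 2 * π * η ^ 2 + 2 * η * g (t - η)

theorem isStarDensity_of_starHyp' {a R : ℝ} {L : ℝ → ℝ} (hLc : ContinuousOn L (Ico 0 R))
    (hL0 : ∀ r ∈ Ico 0 R, 0 ≤ L r) (hL : StarHyp' a R L) :
    IsStarDensity a R (fun r ↦ exp (-2 * a * r) * L r) where
  continuousOn := ContinuousOn.mul (by fun_prop) hLc
  nonneg r hr := mul_nonneg (exp_nonneg _) (hL0 r hr)
  le η t hη hηt htR := by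
    have hY : ∫ r in (t - η)..t, (t - r) * (exp (-2 * a * r) * L r)
        = ∫ r in (t - η)..t, (t - r) * exp (-2 * a * r) * L r := by simp only [mul_assoc]
    rw [hY]
    calc _ = η ^ 2 * ((1 / η ^ 2) * (∫ r in (t - η)..t, exp (-2 * a * r) * L r)
            + (6 * a / η ^ 2) * ∫ r in (t - η)..t, (t - r) * exp (-2 * a * r) * L r) := by
          field_simp
      _ ≤ η ^ 2 * (2 * π + 2 / η * exp (-2 * a * (t - η)) * L (t - η)) :=
          mul_le_mul_of_nonneg_left (hL η t hη hηt htR) (sq_nonneg η)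
      _ = _ := by field_simp

namespace IsStarDensity

variable {a R : ℝ} {g : ℝ → ℝ}

theorem intervalIntegrable (hg : IsStarDensity a R g) {u v : ℝ} (hu : 0 ≤ u) (huv : u ≤ v)
    (hv : v < R) : IntervalIntegrable g volume u v :=
  (hg.continuousOn.mono (Icc_subset_Ico hu hv)).intervalIntegrable_of_Icc huv

theorem integral_nonneg (hg : IsStarDensity a R g) {u v : ℝ} (hu : 0 ≤ u) (huv : u ≤ v)
    (hv : v < R) : 0 ≤ ∫ r in u..v, g r :=
  intervalIntegral.integral_nonneg huv fun x hx ↦ hg.nonneg x ⟨hu.trans hx.1, hx.2.trans_lt hv⟩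

theorem integral_mono_interval (hg : IsStarDensity a R g) {c u v d : ℝ} (hc : 0 ≤ c)
    (hcu : c ≤ u) (huv : u ≤ v) (hvd : v ≤ d) (hd : d < R) :
    ∫ r in u..v, g r ≤ ∫ r in c..d, g r :=
  integral_mono_interval_of_continuousOn hcu huv hvd
    (hg.continuousOn.mono (Icc_subset_Ico hc hd))
    fun x hx ↦ hg.nonneg x ⟨hc.trans hx.1, hx.2.trans_lt hd⟩

theorem integral_sub_mul_mono_interval (hg : IsStarDensity a R g) {c u v t : ℝ} (hc : 0 ≤ c)
    (hcu : c ≤ u) (huv : u ≤ v) (hvt : v ≤ t) (htR : t < R) :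
    ∫ r in u..v, (t - r) * g r ≤ ∫ r in c..t, (t - r) * g r :=
  integral_mono_interval_of_continuousOn hcu huv hvt
    (ContinuousOn.mul (by fun_prop) (hg.continuousOn.mono (Icc_subset_Ico hc htR)))
    fun x hx ↦ mul_nonneg (by linarith [hx.2]) (hg.nonneg x ⟨hc.trans hx.1, hx.2.trans_lt htR⟩)

theorem integral_le_two_pi_mul_sq (hg : IsStarDensity a R g) (ha : 0 ≤ a) (hg0 : g 0 = 0)
    {t : ℝ} (ht : 0 ≤ t) (htR : t < R) : ∫ r in (0:ℝ)..t, g r ≤ 2 * π * t ^ 2 := by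
  rcases ht.eq_or_lt with rfl | ht
  · simp
  have key := hg.le t t ht le_rfl htR
  rw [sub_self, hg0, mul_zero, add_zero] at key
  have hw : 0 ≤ ∫ r in (0:ℝ)..t, (t - r) * g r := by
    simpa using hg.integral_sub_mul_mono_interval le_rfl le_rfl le_rfl ht.le htR
  nlinarith

theorem exists_le_average_boundary (hg : IsStarDensity a R g) {c d t : ℝ} (hc : 0 < c) (hcd : c < d)
    (hdt : d ≤ t) (htR : t < R) :
    ∃ η ∈ Icc c d, (∫ r in (t - η)..t, g r) + 6 * a * ∫ r in (t - η)..t, (t - r) * g r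
      ≤ 2 * π * η ^ 2 + 2 * η * ((∫ r in (t - d)..(t - c), g r) / (d - c)) := by
  obtain ⟨x, hx, hgx⟩ := exists_eq_interval_average (a := t - d) (b := t - c) (by linarith)
    (hg.continuousOn.mono <| by
      rw [uIcc_of_le (by linarith)]; exact Icc_subset_Ico (by linarith) (by linarith))
  rw [uIoo_of_le (by linarith)] at hx
  rw [interval_average_eq_div, sub_sub_sub_cancel_left] at hgx
  refine ⟨t - x, ⟨by linarith [hx.2], by linarith [hx.1]⟩, ?_⟩
  simpa only [sub_sub_cancel, hgx] using hg.le (t - x) t (by linarith [hx.2]) (by linarith [hx.1])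
    htR

theorem integral_window_recursion (hg : IsStarDensity a R g) (ha : 0 < a) {s : ℝ}
    (hs : 2 * a⁻¹ ≤ s) (hsR : s + 2 * a⁻¹ < R) :
    13 * ∫ r in (s - a⁻¹)..s, g r
      ≤ 32 * π * a⁻¹ ^ 2 + 8 * ∫ r in (s - 2 * a⁻¹)..(s - a⁻¹), g r := by
  have hh : 0 < a⁻¹ := inv_pos.2 ha
  obtain ⟨η, ⟨hη₁, hη₂⟩, key⟩ := hg.exists_le_average_boundary (c := 3 * a⁻¹) (d := 4 * a⁻¹)
    (by positivity) (by linarith) (by linarith) hsR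
  rw [show s + 2 * a⁻¹ - 4 * a⁻¹ = s - 2 * a⁻¹ by ring,
    show s + 2 * a⁻¹ - 3 * a⁻¹ = s - a⁻¹ by ring] at key
  set t := s + 2 * a⁻¹
  set w := ∫ r in (s - a⁻¹)..s, g r
  set w' := ∫ r in (s - 2 * a⁻¹)..(s - a⁻¹), g r
  have hmass : w ≤ ∫ r in (t - η)..t, g r :=
    hg.integral_mono_interval (by linarith) (by linarith) (by linarith) (by linarith) hsR
  have hweight : 2 * a⁻¹ * w ≤ ∫ r in (t - η)..t, (t - r) * g r :=
    calc 2 * a⁻¹ * w = ∫ r in (s - a⁻¹)..s, 2 * a⁻¹ * g r :=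
          (intervalIntegral.integral_const_mul _ _).symm
      _ ≤ ∫ r in (s - a⁻¹)..s, (t - r) * g r := by
          refine integral_mono_on (by linarith)
            ((hg.intervalIntegrable (by linarith) (by linarith) (by linarith)).const_mul _)
            (ContinuousOn.intervalIntegrable_of_Icc (by linarith) (ContinuousOn.mul (by fun_prop)
              (hg.continuousOn.mono (Icc_subset_Ico (by linarith) (by linarith))))) fun r hr ↦ ?_
          exact mul_le_mul_of_nonneg_right (by linarith [hr.2])
            (hg.nonneg r ⟨by linarith [hr.1], by linarith [hr.2]⟩)
      _ ≤ _ := hg.integral_sub_mul_mono_interval (by linarith) (by linarith) (by linarith)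
          (by linarith) hsR
  have hw' : 0 ≤ w' := hg.integral_nonneg (by linarith) (by linarith) (by linarith)
  have hηa : η * a ≤ 4 := by
    simpa [mul_assoc, inv_mul_cancel₀ ha.ne'] using mul_le_mul_of_nonneg_right hη₂ ha.le
  have hη_sq : 2 * π * η ^ 2 ≤ 32 * π * a⁻¹ ^ 2 := by
    nlinarith [pow_le_pow_left₀ (by linarith) hη₂ 2, pi_pos]
  have hbdry : 2 * η * (w' / (4 * a⁻¹ - 3 * a⁻¹)) = 2 * (η * a) * w' := by field_simp; ring
  have hwt : 6 * a * (2 * a⁻¹ * w) = 12 * w := by field_simp; ring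
  nlinarith [mul_le_mul_of_nonneg_left hweight (by positivity : (0:ℝ) ≤ 6 * a),
    mul_le_mul_of_nonneg_right hηa hw']

theorem integral_window_le (hg : IsStarDensity a R g) (ha : 0 < a) (hg0 : g 0 = 0) {s : ℝ}
    (hs : 2 * a⁻¹ ≤ s) (hsR : s + 2 * a⁻¹ < R) :
    ∫ r in (s - a⁻¹)..s, g r ≤ 18 * π * a⁻¹ ^ 2 := by
  have hh : 0 < a⁻¹ := inv_pos.2 ha
  have hX : 0 ≤ π * a⁻¹ ^ 2 := by positivity
  refine forall_of_forall_le_of_step (b := 3 * a⁻¹) hh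
    (P := fun s ↦ 2 * a⁻¹ ≤ s → s + 2 * a⁻¹ < R → ∫ r in (s - a⁻¹)..s, g r ≤ 18 * π * a⁻¹ ^ 2)
    ?_ ?_ s hs hsR
  · intro s hs3 hs hsR
    calc ∫ r in (s - a⁻¹)..s, g r ≤ ∫ r in (0:ℝ)..s, g r :=
          hg.integral_mono_interval le_rfl (by linarith) (by linarith) le_rfl (by linarith)
      _ ≤ 2 * π * s ^ 2 := hg.integral_le_two_pi_mul_sq ha.le hg0 (by linarith) (by linarith)
      _ ≤ 18 * π * a⁻¹ ^ 2 := by nlinarith [pow_le_pow_left₀ (by linarith) hs3 2, pi_pos]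
  · intro s hs3 ih hs hsR
    have hprev := ih (by linarith) (by linarith)
    rw [show s - a⁻¹ - a⁻¹ = s - 2 * a⁻¹ by ring] at hprev
    linarith [hg.integral_window_recursion ha hs hsR]

theorem integral_double_window_le (hg : IsStarDensity a R g) (ha : 0 < a) (hg0 : g 0 = 0)
    {t : ℝ} (ht : 5 * a⁻¹ ≤ t) (htR : t < R) :
    ∫ r in (t - 2 * a⁻¹)..t, g r ≤ 176 * π * a⁻¹ ^ 2 := by
  have hh : 0 < a⁻¹ := inv_pos.2 ha
  obtain ⟨η, ⟨hη₁, hη₂⟩, key⟩ := hg.exists_le_average_boundary (c := 2 * a⁻¹) (d := 4 * a⁻¹)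
    (by positivity) (by linarith) (by linarith) htR
  have hw₁ := hg.integral_window_le ha hg0 (s := t - 2 * a⁻¹) (by linarith) (by linarith)
  have hw₂ := hg.integral_window_le ha hg0 (s := t - 3 * a⁻¹) (by linarith) (by linarith)
  rw [show t - 2 * a⁻¹ - a⁻¹ = t - 3 * a⁻¹ by ring] at hw₁
  rw [show t - 3 * a⁻¹ - a⁻¹ = t - 4 * a⁻¹ by ring] at hw₂
  have hsplit := integral_add_adjacent_intervals
    (hg.intervalIntegrable (u := t - 4 * a⁻¹) (v := t - 3 * a⁻¹) (by linarith) (by linarith)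
      (by linarith))
    (hg.intervalIntegrable (v := t - 2 * a⁻¹) (by linarith) (by linarith) (by linarith))
  set w := ∫ r in (t - 4 * a⁻¹)..(t - 2 * a⁻¹), g r
  have hw : 0 ≤ w := hg.integral_nonneg (by linarith) (by linarith) (by linarith)
  have hmass : ∫ r in (t - 2 * a⁻¹)..t, g r ≤ ∫ r in (t - η)..t, g r :=
    hg.integral_mono_interval (by linarith) (by linarith) (by linarith) le_rfl htR
  have hweight : 0 ≤ ∫ r in (t - η)..t, (t - r) * g r := by
    simpa using hg.integral_sub_mul_mono_interval (c := t - η) (u := t) (by linarith) (by linarith)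
      le_rfl le_rfl htR
  have hηa : η * a ≤ 4 := by
    simpa [mul_assoc, inv_mul_cancel₀ ha.ne'] using mul_le_mul_of_nonneg_right hη₂ ha.le
  have hη_sq : 2 * π * η ^ 2 ≤ 32 * π * a⁻¹ ^ 2 := by
    nlinarith [pow_le_pow_left₀ (by linarith) hη₂ 2, pi_pos]
  have hbdry : 2 * η * (w / (4 * a⁻¹ - 2 * a⁻¹)) = (η * a) * w := by field_simp; ring
  nlinarith [mul_le_mul_of_nonneg_right hηa hw]

theorem integral_le_of_sub_le (hg : IsStarDensity a R g) (ha : 0 < a) (hg0 : g 0 = 0)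
    {u v : ℝ} (hu : 0 ≤ u) (huv : u ≤ v) (hvR : v < R) (hvu : v - u ≤ a⁻¹) :
    ∫ r in u..v, g r ≤ 176 * π * a⁻¹ ^ 2 := by
  rcases lt_or_ge v (5 * a⁻¹) with hv | hv
  · calc ∫ r in u..v, g r ≤ ∫ r in (0:ℝ)..v, g r :=
          hg.integral_mono_interval le_rfl hu huv le_rfl hvR
      _ ≤ 2 * π * v ^ 2 := hg.integral_le_two_pi_mul_sq ha.le hg0 (hu.trans huv) hvR
      _ ≤ 176 * π * a⁻¹ ^ 2 := by
          nlinarith [pow_le_pow_left₀ (hu.trans huv) hv.le 2, pi_pos]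
  · calc ∫ r in u..v, g r ≤ ∫ r in (v - 2 * a⁻¹)..v, g r :=
          hg.integral_mono_interval (by linarith [inv_pos.2 ha]) (by linarith [inv_pos.2 ha])
            huv le_rfl hvR
      _ ≤ 176 * π * a⁻¹ ^ 2 := hg.integral_double_window_le ha hg0 hv hvR

end IsStarDensity

theorem stmt_9 (a : ℝ) (ha : 0 < a) :
    ∃ C : ℝ, 0 < C ∧
      ∀ (R : ℝ) (L : ℝ → ℝ), 0 < R →
        ContinuousOn L (Set.Ico (0:ℝ) R) →
        (∀ r ∈ Set.Ico (0:ℝ) R, 0 ≤ L r) →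
        L 0 = 0 →
        StarHyp' a R L →
        ∀ t ∈ Set.Ioo (0:ℝ) R,
          (∫ r in (0:ℝ)..t, L r) ≤ C * Real.exp (2 * a * t) := by
  refine ⟨176 * π * a⁻¹ ^ 2 / (1 - exp (-2)),
    div_pos (by positivity) (sub_pos.2 (exp_lt_one_iff.2 (by norm_num))), ?_⟩
  intro R L _ hLc hLnn hL0 hL t ⟨ht0, htR⟩
  have hg := isStarDensity_of_starHyp' hLc hLnn hL
  have hg0 : exp (-2 * a * 0) * L 0 = 0 := by simp [hL0]
  calc ∫ r in (0:ℝ)..t, L r = ∫ r in (0:ℝ)..t, exp (2 * a * r) * (exp (-2 * a * r) * L r) :=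
        integral_congr fun r _ ↦ by rw [← mul_assoc, ← exp_add]; ring_nf; simp
    _ ≤ 176 * π * a⁻¹ ^ 2 / (1 - exp (-(2 * a * a⁻¹))) * exp (2 * a * t) :=
        integral_exp_mul_le_of_forall_integral_le (by positivity) (inv_pos.2 ha) ht0.le
          (hg.continuousOn.mono (Icc_subset_Ico le_rfl htR))
          (fun r hr ↦ hg.nonneg r ⟨hr.1, hr.2.trans_lt htR⟩)
          fun u v hu huv hvt hvu ↦ hg.integral_le_of_sub_le ha hg0 hu huv (hvt.trans_lt htR) hvu
    _ = 176 * π * a⁻¹ ^ 2 / (1 - exp (-2)) * exp (2 * a * t) := by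
        rw [mul_inv_cancel_right₀ ha.ne']
end

section
/- There exists a universal constant R₀ > 0 with the following property: for every R ≥ R₀ and every continuous function L : [0,R] → ℝ such that (i) L(r) ≥ 2πr for all r ∈ [0,R], and (ii) ∫₀^R ((ln(R+1) − ln(r+1))/(r+1)²)·L(r) dr ≤ π·ln²(R+1), there exists r₀ ∈ [√R, R] with L(r₀) ≤ 2π·r₀·(1 + 10/ln(R+1)). -/
open Real MeasureTheory intervalIntegral Set

/-!
Write `x = log (R + 1)` and `w(r) = (x - log (r + 1)) / (r + 1)²`, so that (ii) reads
`∫₀ᴿ w L ≤ π x²`. The first moment of `w` has an explicit primitive, giving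
`∫₀ᴿ w(r) r dr = x²/2 - x + 1 - 1/(R+1)`: the bound (i) alone leaves a slack of only about
`2πx` in (ii). If `L(r) > 2πr (1 + 10/x)` on all of `[√R, R]`, the extra term contributes
`(20π/x) ∫_{√R}^R w(r) r dr ≥ (20π/x) · x²/10 = 2πx`, since `∫_{√R}^R w(r) r dr ≈ (x - x/2)²/2`
captures a fixed fraction of the moment; this exceeds the slack.
-/

noncomputable def logWeight (c r : ℝ) : ℝ := (c - log (r + 1)) / (r + 1) ^ 2

noncomputable def logWeightMomentPrimitive (c t : ℝ) : ℝ :=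
  c * log (t + 1) - log (t + 1) ^ 2 / 2 - (log (t + 1) - c + 1) / (t + 1)

lemma continuousOn_logWeight (c : ℝ) : ContinuousOn (logWeight c) (Ioi (-1)) := by
  have hpos : ∀ r ∈ Ioi (-1 : ℝ), r + 1 ≠ 0 := fun r hr => by
    simp only [mem_Ioi] at hr; linarith
  unfold logWeight
  exact (continuousOn_const.sub ((continuousOn_id.add continuousOn_const).log hpos)).div
    (by fun_prop) fun r hr => pow_ne_zero 2 (hpos r hr)

lemma logWeight_log_nonneg {R r : ℝ} (hr : -1 < r) (hrR : r ≤ R) :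
    0 ≤ logWeight (log (R + 1)) r :=
  div_nonneg (sub_nonneg.2 (log_le_log (by linarith) (by linarith))) (sq_nonneg _)

lemma hasDerivAt_logWeightMomentPrimitive (c : ℝ) {r : ℝ} (hr : -1 < r) :
    HasDerivAt (logWeightMomentPrimitive c) (logWeight c r * r) r := by
  have hr1 : r + 1 ≠ 0 := by linarith
  have hid : HasDerivAt (fun t : ℝ => t + 1) 1 r := (hasDerivAt_id r).add_const 1
  have hlog : HasDerivAt (fun t => log (t + 1)) (1 / (r + 1)) r := by
    simpa [Function.comp_def] using (hasDerivAt_log hr1).comp r hid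
  refine (((hlog.const_mul c).sub ((hlog.pow 2).div_const 2)).sub
    (((hlog.sub_const c).add_const 1).div hid hr1)).congr_deriv ?_
  unfold logWeight
  field_simp
  ring

lemma integral_logWeight_mul_self (c : ℝ) {a b : ℝ} (ha : -1 < a) (hab : a ≤ b) :
    ∫ r in a..b, logWeight c r * r =
      logWeightMomentPrimitive c b - logWeightMomentPrimitive c a := by
  have hsub : uIcc a b ⊆ Ioi (-1) := by
    rw [uIcc_of_le hab]; exact fun r hr => lt_of_lt_of_le ha hr.1
  refine integral_eq_sub_of_hasDerivAt
    (fun r hr => hasDerivAt_logWeightMomentPrimitive c (hsub hr)) ?_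
  exact (((continuousOn_logWeight c).mono hsub).mul continuousOn_id).intervalIntegrable

lemma integral_logWeight_log_mul_self {R : ℝ} (hR : 0 ≤ R) :
    ∫ r in (0 : ℝ)..R, logWeight (log (R + 1)) r * r =
      log (R + 1) ^ 2 / 2 - log (R + 1) + 1 - 1 / (R + 1) := by
  rw [integral_logWeight_mul_self _ (by norm_num) hR]
  simp only [logWeightMomentPrimitive, zero_add, log_one]
  ring

lemma sq_div_ten_le_integral_logWeight_log_mul_self {R : ℝ} (hR : 1 ≤ R)
    (hx : 50 ≤ log (R + 1)) :
    log (R + 1) ^ 2 / 10 ≤ ∫ r in √R..R, logWeight (log (R + 1)) r * r := by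
  have hs : 1 ≤ √R := one_le_sqrt.2 hR
  have hsR : √R ≤ R := sqrt_le_self_iff.2 (Or.inr hR)
  rw [integral_logWeight_mul_self _ (by linarith) hsR]
  set x := log (R + 1)
  set y := log (√R + 1) with hy
  have hyx : 2 * y ≤ log 2 + x := by
    have hsq : (√R + 1) ^ 2 ≤ 2 * (R + 1) := by
      nlinarith [sq_nonneg (√R - 1), sq_sqrt (by linarith : (0 : ℝ) ≤ R)]
    rw [hy, ← log_rpow (by linarith), ← log_mul (by norm_num) (by linarith)]
    exact log_le_log (by positivity) (by exact_mod_cast hsq)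
  have hy0 : 0 ≤ y := log_nonneg (by linarith)
  have hlog2 : log 2 < 1 := by linarith [log_two_lt_d9]
  have hR1 : 1 / (R + 1) ≤ 1 := by rw [div_le_one (by linarith)]; linarith
  have htail : -(x - 1) / 2 ≤ (y - x + 1) / (√R + 1) := by
    rw [le_div_iff₀ (by linarith)]
    nlinarith
  have hxy : (x - 1) / 2 ≤ x - y := by linarith
  have hexpand : logWeightMomentPrimitive x R - logWeightMomentPrimitive x √R =
      (x - y) ^ 2 / 2 - 1 / (R + 1) + (y - x + 1) / (√R + 1) := by
    simp only [logWeightMomentPrimitive, ← hy]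
    ring
  rw [hexpand]
  nlinarith [mul_self_le_mul_self (by linarith) hxy]

lemma add_mul_integral_le_integral_mul {w g L : ℝ → ℝ} {a s b A B : ℝ} (has : a ≤ s)
    (hsb : s ≤ b) (hw : ContinuousOn w (Icc a b)) (hw0 : ∀ r ∈ Icc a b, 0 ≤ w r)
    (hg : ContinuousOn g (Icc a b)) (hL : ContinuousOn L (Icc a b))
    (hA : ∀ r ∈ Icc a b, A * g r ≤ L r) (hAB : ∀ r ∈ Icc s b, (A + B) * g r ≤ L r) :
    A * (∫ r in a..b, w r * g r) + B * ∫ r in s..b, w r * g r ≤ ∫ r in a..b, w r * L r := by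
  have hint : ∀ {f : ℝ → ℝ}, ContinuousOn f (Icc a b) → ∀ {u v : ℝ}, a ≤ u → u ≤ v → v ≤ b →
      IntervalIntegrable (fun r => w r * f r) volume u v := fun hf u v hu huv hv =>
    ((hw.mul hf).mono (by rw [uIcc_of_le huv]; exact Icc_subset_Icc hu hv)).intervalIntegrable
  have hleft : ∫ r in a..s, w r * (A * g r) ≤ ∫ r in a..s, w r * L r :=
    integral_mono_on has (hint (continuousOn_const.mul hg) le_rfl has hsb)
      (hint hL le_rfl has hsb) fun r hr =>
        mul_le_mul_of_nonneg_left (hA r ⟨hr.1, hr.2.trans hsb⟩) (hw0 r ⟨hr.1, hr.2.trans hsb⟩)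
  have hright : ∫ r in s..b, w r * ((A + B) * g r) ≤ ∫ r in s..b, w r * L r :=
    integral_mono_on hsb (hint (continuousOn_const.mul hg) has hsb le_rfl)
      (hint hL has hsb le_rfl) fun r hr =>
        mul_le_mul_of_nonneg_left (hAB r hr) (hw0 r ⟨has.trans hr.1, hr.2⟩)
  have hsplit : ∀ {f : ℝ → ℝ}, ContinuousOn f (Icc a b) →
      ∫ r in a..b, w r * f r = (∫ r in a..s, w r * f r) + ∫ r in s..b, w r * f r := fun hf =>
    (integral_add_adjacent_intervals (hint hf le_rfl has hsb) (hint hf has hsb le_rfl)).symm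
  have hpull : ∀ (C : ℝ) (u v : ℝ),
      ∫ r in u..v, w r * (C * g r) = C * ∫ r in u..v, w r * g r := fun C u v => by
    rw [← intervalIntegral.integral_const_mul]; congr 1; ext r; ring
  rw [hsplit hL, hsplit hg]
  rw [hpull] at hleft hright
  linarith

theorem stmt_11 :
    ∃ R₀ : ℝ, 0 < R₀ ∧
      ∀ R : ℝ, R₀ ≤ R →
        ∀ L : ℝ → ℝ, ContinuousOn L (Set.Icc 0 R) →
          (∀ r ∈ Set.Icc (0:ℝ) R, 2 * Real.pi * r ≤ L r) →
          (∫ r in (0:ℝ)..R,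
              ((Real.log (R + 1) - Real.log (r + 1)) / (r + 1) ^ 2) * L r)
            ≤ Real.pi * (Real.log (R + 1)) ^ 2 →
          ∃ r₀ ∈ Set.Icc (Real.sqrt R) R,
            L r₀ ≤ 2 * Real.pi * r₀ * (1 + 10 / Real.log (R + 1)) := by
  refine ⟨exp 50, exp_pos 50, fun R hR L hL hlow hInt => ?_⟩
  have hx : 50 ≤ log (R + 1) := by
    rw [← log_exp 50]; exact log_le_log (exp_pos 50) (by linarith)
  replace hR : 1 ≤ R := le_trans (by linarith [add_one_le_exp (50 : ℝ)]) hR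
  set x := log (R + 1)
  by_contra! hcon
  have hlower := add_mul_integral_le_integral_mul (w := logWeight x) (g := id)
    (A := 2 * π) (B := 2 * π * (10 / x)) (sqrt_nonneg R) (sqrt_le_self_iff.2 (Or.inr hR))
    ((continuousOn_logWeight x).mono fun r hr => by simp only [mem_Ioi]; linarith [hr.1])
    (fun r hr => logWeight_log_nonneg (by linarith [hr.1]) hr.2) continuousOn_id hL hlow
    fun r hr => by simp only [id]; linarith [hcon r hr]
  simp only [id] at hlower
  rw [integral_logWeight_log_mul_self (by linarith)] at hlower
  replace hInt : ∫ r in (0 : ℝ)..R, logWeight x r * L r ≤ π * x ^ 2 := hInt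
  have htail : 2 * π * x ≤ 2 * π * (10 / x) * ∫ r in √R..R, logWeight x r * r := by
    calc 2 * π * x = 2 * π * (10 / x) * (x ^ 2 / 10) := by field_simp
      _ ≤ _ := by gcongr; exact sq_div_ten_le_integral_logWeight_log_mul_self hR hx
  have hslack : π * (1 / (R + 1)) < π :=
    mul_lt_of_lt_one_right pi_pos (by rw [div_lt_one (by linarith)]; linarith)
  linarith
end

section
/- There exists a universal constant R₀ > 0 with the following property: for every R ≥ R₀ and every continuous function L : [0,R] → ℝ such that (i) L(r) ≥ 2πr for all r ∈ [0,R], (ii) the function r ↦ L(r)/r is nondecreasing on (0,R], and (iii) ∫₀^R ((ln(R+1) − ln(r+1))/(r+1)²)·L(r) dr ≤ π·ln²(R+1), one has L(r) ≤ 2π·r·(1 + 10/ln R) for all r ∈ (0, √R], and consequently ∫₀^r L(s) ds ≤ π·r²·(1 + 10/ln R) for all r ∈ (0, √R]. -/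
open Real MeasureTheory intervalIntegral Set

/-!
Suppose `L r₀ > 2π r₀ (1 + ε)` for some `r₀ ≤ √R`, where `ε = 10 / log R`. Since `L r / r` is
nondecreasing, `L r ≥ 2π (1 + ε) r` on `[r₀, R]`, while `L r ≥ 2π r` everywhere. The weight
`w r = (log (R + 1) - log (r + 1)) / (r + 1) ^ 2` has an explicit first moment,
`∫₀ᴿ w r · r dr = log² (R + 1) / 2 - log (R + 1) + O(1)`, so the lower bound `2π r` alone leaves
only `2π log (R + 1) + O(1)` of the budget `π log² (R + 1)` of hypothesis (iii). The excess on
`[√R, R]` contributes `2π ε ∫_{√R}^R w r · r dr ≥ 2π ε (log² (R + 1) / 8 - log (R + 1))`,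
about `(5π/2) log R`, which is more than what is left. Integrating the length bound gives the
area bound.
-/

noncomputable def stabilityWeight (A r : ℝ) : ℝ := (A - log (r + 1)) / (r + 1) ^ 2

noncomputable def stabilityMoment (A x : ℝ) : ℝ :=
  A * log (x + 1) - log (x + 1) ^ 2 / 2 + (A - log (x + 1) - 1) / (x + 1)

theorem hasDerivAt_stabilityMoment (A : ℝ) {x : ℝ} (hx : x + 1 ≠ 0) :
    HasDerivAt (stabilityMoment A) (stabilityWeight A x * x) x := by
  have hshift : HasDerivAt (fun x : ℝ => x + 1) 1 x := (hasDerivAt_id x).add_const 1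
  have hlog := hshift.log hx
  have h := ((hlog.const_mul A).sub ((hlog.pow 2).div_const 2)).add
    (((hlog.const_sub A).sub_const 1).div hshift hx)
  refine h.congr_deriv ?_
  unfold stabilityWeight
  field_simp
  ring

theorem continuousOn_stabilityWeight (A : ℝ) : ContinuousOn (stabilityWeight A) (Ioi (-1)) :=
  fun r hr => by
    have hr1 : r + 1 ≠ 0 := ne_of_gt (by linarith [mem_Ioi.1 hr])
    unfold stabilityWeight
    exact ContinuousAt.continuousWithinAt (by fun_prop (disch := simp [hr1]))

theorem integral_stabilityWeight_mul_self (A : ℝ) {a b : ℝ} (ha : -1 < a) (hb : -1 < b) :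
    ∫ r in a..b, stabilityWeight A r * r = stabilityMoment A b - stabilityMoment A a := by
  have hsub : uIcc a b ⊆ Ioi (-1) := fun x hx => lt_of_lt_of_le (lt_min ha hb) hx.1
  refine integral_eq_sub_of_hasDerivAt (fun x hx => hasDerivAt_stabilityMoment A ?_)
    (((continuousOn_stabilityWeight A).mul continuousOn_id).mono hsub).intervalIntegrable
  have : (-1 : ℝ) < x := hsub hx
  linarith

theorem stabilityWeight_nonneg {R r : ℝ} (hr : 0 ≤ r) (hrR : r ≤ R) :
    0 ≤ stabilityWeight (log (R + 1)) r :=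
  div_nonneg (sub_nonneg.2 (log_le_log (by linarith) (by linarith))) (by positivity)

theorem stabilityMoment_sub (R s : ℝ) :
    stabilityMoment (log (R + 1)) R - stabilityMoment (log (R + 1)) s =
      (log (R + 1) - log (s + 1)) ^ 2 / 2 - (log (R + 1) - log (s + 1) - 1) / (s + 1)
        - (R + 1)⁻¹ := by
  unfold stabilityMoment
  ring

theorem integral_mul_ge_of_excess {w L : ℝ → ℝ} {R r₀ s k ε : ℝ}
    (hw : ContinuousOn w (Icc 0 R)) (hw0 : ∀ r ∈ Icc 0 R, 0 ≤ w r)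
    (hL : ContinuousOn L (Icc 0 R)) (hlow : ∀ r ∈ Icc 0 R, k * r ≤ L r)
    (hmono : ∀ x y, 0 < x → x ≤ y → y ≤ R → L x / x ≤ L y / y)
    (hr₀ : 0 < r₀) (hr₀s : r₀ ≤ s) (hsR : s ≤ R) (hexc : k * r₀ * (1 + ε) ≤ L r₀) :
    k * ((∫ r in 0..R, w r * r) + ε * ∫ r in s..R, w r * r) ≤ ∫ r in 0..R, w r * L r := by
  have hs : 0 ≤ s := hr₀.le.trans hr₀s
  have hii : ∀ {f : ℝ → ℝ}, ContinuousOn f (Icc 0 R) → ∀ {a b : ℝ}, 0 ≤ a → a ≤ b → b ≤ R →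
      IntervalIntegrable f volume a b := fun hf a b ha hab hb =>
    (hf.mono (Icc_subset_Icc ha hb)).intervalIntegrable_of_Icc hab
  have hwr : ContinuousOn (fun r => w r * r) (Icc 0 R) := hw.mul continuousOn_id
  have hwL : ContinuousOn (fun r => w r * L r) (Icc 0 R) := hw.mul hL
  have hleft : ∫ r in 0..s, k * (w r * r) ≤ ∫ r in 0..s, w r * L r := by
    refine integral_mono_on hs ((hii hwr le_rfl hs hsR).const_mul k) (hii hwL le_rfl hs hsR)
      fun r hr => ?_
    have hrR : r ∈ Icc 0 R := ⟨hr.1, hr.2.trans hsR⟩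
    exact (mul_le_mul_of_nonneg_left (hlow r hrR) (hw0 r hrR)).trans_eq' (by ring)
  have hright : ∫ r in s..R, k * (1 + ε) * (w r * r) ≤ ∫ r in s..R, w r * L r := by
    refine integral_mono_on hsR ((hii hwr hs hsR le_rfl).const_mul _) (hii hwL hs hsR le_rfl)
      fun r hr => ?_
    have hr0 : 0 < r := hr₀.trans_le (hr₀s.trans hr.1)
    have hratio : k * (1 + ε) ≤ L r / r :=
      ((le_div_iff₀ hr₀).2 (by linarith)).trans (hmono r₀ r hr₀ (hr₀s.trans hr.1) hr.2)
    have hlin : k * (1 + ε) * r ≤ L r := (le_div_iff₀ hr0).1 hratio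
    exact (mul_le_mul_of_nonneg_left hlin (hw0 r ⟨hr0.le, hr.2⟩)).trans_eq' (by ring)
  rw [intervalIntegral.integral_const_mul] at hleft hright
  have hsplit_r := integral_add_adjacent_intervals (hii hwr le_rfl hs hsR) (hii hwr hs hsR le_rfl)
  have hsplit_L := integral_add_adjacent_intervals (hii hwL le_rfl hs hsR) (hii hwL hs hsR le_rfl)
  linear_combination hleft + hright - k * hsplit_r + hsplit_L

theorem integral_le_of_le_mul_self {L : ℝ → ℝ} {c r : ℝ} (hr : 0 ≤ r)
    (hL : ContinuousOn L (Icc 0 r)) (hle : ∀ s, 0 < s → s ≤ r → L s ≤ c * s) :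
    ∫ s in 0..r, L s ≤ c * r ^ 2 / 2 := by
  calc ∫ s in 0..r, L s ≤ ∫ s in 0..r, c * s :=
        integral_mono_on_of_le_Ioo hr (hL.intervalIntegrable_of_Icc hr)
          ((continuous_const_mul c).intervalIntegrable 0 r) fun s hs => hle s hs.1 hs.2.le
    _ = c * r ^ 2 / 2 := by
      rw [intervalIntegral.integral_const_mul, integral_id]
      ring

theorem stabilityMoment_tail_ge {R : ℝ} (hR : 0 ≤ R) (hA : 3 ≤ log (R + 1)) :
    log (R + 1) ^ 2 / 8 - log (R + 1) ≤
      stabilityMoment (log (R + 1)) R - stabilityMoment (log (R + 1)) √R := by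
  set A := log (R + 1)
  set B := √R + 1
  set l := log B
  have hsq : √R ^ 2 = R := sq_sqrt hR
  have hB : 0 < B := by positivity
  have hlogB2 : log (B ^ 2) = 2 * l := by rw [log_pow]; push_cast; ring
  have hAl : A ≤ 2 * l := by
    rw [← hlogB2]
    exact log_le_log (by linarith) (by nlinarith [sqrt_nonneg R])
  have hlA : 2 * l ≤ 1 + A := by
    have hB2 : B ^ 2 ≤ 2 * (R + 1) := by nlinarith [sq_nonneg (√R - 1)]
    have := log_le_log (by positivity) hB2
    rw [hlogB2, log_mul two_ne_zero (by linarith)] at this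
    linarith [log_le_sub_one_of_pos two_pos]
  have hfrac : (A - l - 1) / B ≤ 1 :=
    (div_le_one hB).2 (by linarith [log_le_sub_one_of_pos hB])
  have hRinv : (R + 1)⁻¹ ≤ 1 := inv_le_one_of_one_le₀ (by linarith)
  have hsq_le : ((A - 1) / 2) ^ 2 ≤ (A - l) ^ 2 :=
    pow_le_pow_left₀ (by linarith) (by linarith) 2
  rw [stabilityMoment_sub]
  nlinarith

theorem length_le_of_stability {R : ℝ} (hR : exp 100 ≤ R) {L : ℝ → ℝ}
    (hLc : ContinuousOn L (Icc 0 R)) (hLlow : ∀ r ∈ Icc 0 R, 2 * π * r ≤ L r)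
    (hmono : ∀ x y, 0 < x → x ≤ y → y ≤ R → L x / x ≤ L y / y)
    (hstab : ∫ r in 0..R, stabilityWeight (log (R + 1)) r * L r ≤ π * log (R + 1) ^ 2)
    {r : ℝ} (hr : 0 < r) (hrR : r ≤ √R) : L r ≤ 2 * π * r * (1 + 10 / log R) := by
  set A := log (R + 1)
  set ε := 10 / log R
  have hR1 : 1 ≤ R := (one_le_exp (by norm_num)).trans hR
  have hlogR : 100 ≤ log R := by simpa using log_le_log (exp_pos 100) hR
  have hAR : log R ≤ A := log_le_log (by linarith) (by linarith)
  have hsR : √R ≤ R := sqrt_le_self_iff.2 (Or.inr hR1)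
  by_contra! hexc
  have hcmp := integral_mul_ge_of_excess (w := stabilityWeight A)
    ((continuousOn_stabilityWeight A).mono fun x hx => show (-1 : ℝ) < x by linarith [hx.1])
    (fun x hx => stabilityWeight_nonneg hx.1 hx.2) hLc hLlow hmono hr hrR hsR hexc.le
  rw [integral_stabilityWeight_mul_self A (by norm_num) (by linarith),
    integral_stabilityWeight_mul_self A (by linarith [sqrt_nonneg R]) (by linarith)] at hcmp
  have hwhole : stabilityMoment A R - stabilityMoment A 0 = A ^ 2 / 2 - (A - 1) - (R + 1)⁻¹ := by
    simpa using stabilityMoment_sub R 0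
  have htail : A ^ 2 / 8 - A ≤ stabilityMoment A R - stabilityMoment A √R :=
    stabilityMoment_tail_ge (by linarith) (by linarith)
  have hε : 10 / A ≤ ε := div_le_div_of_nonneg_left (by norm_num) (by linarith) hAR
  have hexcess : ε * (stabilityMoment A R - stabilityMoment A √R) ≤ A - 1 + (R + 1)⁻¹ := by
    nlinarith [hcmp.trans hstab, pi_pos]
  have hscaled : 10 / A * (A ^ 2 / 8 - A) = 5 * A / 4 - 10 := by
    field_simp [(by linarith : A ≠ 0)]
    ring
  have hexcess_ge := mul_le_mul hε htail (by nlinarith) (by positivity)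
  linarith [inv_le_one_of_one_le₀ (by linarith : (1 : ℝ) ≤ R + 1)]

theorem stmt_12 :
    ∃ R₀ : ℝ, 0 < R₀ ∧
      ∀ R : ℝ, R₀ ≤ R →
        ∀ L : ℝ → ℝ, ContinuousOn L (Set.Icc 0 R) →
          (∀ r ∈ Set.Icc (0:ℝ) R, 2 * Real.pi * r ≤ L r) →
          (∀ x y : ℝ, 0 < x → x ≤ y → y ≤ R → L x / x ≤ L y / y) →
          (∫ r in (0:ℝ)..R,
              ((Real.log (R + 1) - Real.log (r + 1)) / (r + 1) ^ 2) * L r)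
            ≤ Real.pi * (Real.log (R + 1)) ^ 2 →
          (∀ r : ℝ, 0 < r → r ≤ Real.sqrt R →
              L r ≤ 2 * Real.pi * r * (1 + 10 / Real.log R)) ∧
          (∀ r : ℝ, 0 < r → r ≤ Real.sqrt R →
              (∫ s in (0:ℝ)..r, L s) ≤ Real.pi * r ^ 2 * (1 + 10 / Real.log R)) := by
  refine ⟨exp 100, exp_pos 100, fun R hR L hLc hLlow hmono hstab => ?_⟩
  have hlength r (hr : 0 < r) (hrR : r ≤ √R) : L r ≤ 2 * π * r * (1 + 10 / log R) :=
    length_le_of_stability hR hLc hLlow hmono hstab hr hrR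
  refine ⟨hlength, fun r hr hrR => ?_⟩
  have hsR : √R ≤ R := sqrt_le_self_iff.2 (Or.inr ((one_le_exp (by norm_num)).trans hR))
  calc ∫ s in 0..r, L s ≤ 2 * π * (1 + 10 / log R) * r ^ 2 / 2 :=
        integral_le_of_le_mul_self hr.le (hLc.mono (Icc_subset_Icc le_rfl (hrR.trans hsR)))
          fun s hs hsr => (hlength s hs (hsr.trans hrR)).trans_eq (by ring)
    _ = π * r ^ 2 * (1 + 10 / log R) := by ring
end

section
/- There exists R₀ > 0 such that for all R ≥ R₀, ∫_{√R}^{R} (ln(R+1) − ln(r+1))·(r/(r+1)²) dr ≥ (1/9)·ln²(R+1). -/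
/-!
After the substitution `x = r + 1` the integrand is `(L - log x) (x - 1) / x²` with `L = log (R + 1)`,
which has the elementary antiderivative `(L - log x - 1) / x - (L - log x)² / 2`. With
`m = L - log (√R + 1)` the integral is therefore `m² / 2 - (m - 1) / (√R + 1) - 1 / (R + 1)`.
Since `(√R + 1)²` lies between `R + 1` and `2 (R + 1)`, we get `m ≥ (L - log 2) / 2` and the two
correction terms are bounded, so the integral is at least `L² / 8 - O(L)`, which beats `L² / 9`
once `L ≥ 40`.
-/

open Real MeasureTheory intervalIntegral

theorem hasDerivAt_antideriv_sub_log_mul_sub_one_div_sq (c : ℝ) {x : ℝ} (hx : x ≠ 0) :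
    HasDerivAt (fun x => (c - log x - 1) / x - (c - log x) ^ 2 / 2)
      ((c - log x) * ((x - 1) / x ^ 2)) x := by
  have hlog : HasDerivAt (fun x => c - log x) (-x⁻¹) x := (hasDerivAt_log hx).const_sub c
  refine (((hlog.sub_const 1).div (hasDerivAt_id' x) hx).sub
    ((hlog.pow 2).div_const 2)).congr_deriv ?_
  field_simp
  ring

theorem integral_log_sub_log_mul_sub_one_div_sq {a b : ℝ} (ha : 0 < a) (hb : 0 < b) :
    ∫ x in a..b, (log b - log x) * ((x - 1) / x ^ 2) =
      (log b - log a) ^ 2 / 2 - (log b - log a - 1) / a - 1 / b := by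
  have hne : ∀ x ∈ Set.uIcc a b, x ≠ 0 := fun x hx => ((lt_min ha hb).trans_le hx.1).ne'
  rw [integral_eq_sub_of_hasDerivAt
    (fun x hx => hasDerivAt_antideriv_sub_log_mul_sub_one_div_sq (log b) (hne x hx))]
  · ring
  · refine ContinuousOn.intervalIntegrable fun x hx => ?_
    have := hne x hx
    exact ContinuousAt.continuousWithinAt (by fun_prop (disch := positivity))

theorem stmt_14 :
    ∃ R₀ : ℝ, 0 < R₀ ∧
      ∀ R : ℝ, R₀ ≤ R →
        (1 / 9) * (Real.log (R + 1)) ^ 2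
          ≤ ∫ r in (Real.sqrt R)..R,
              (Real.log (R + 1) - Real.log (r + 1)) * (r / (r + 1) ^ 2) := by
  refine ⟨exp 40, exp_pos 40, fun R hR => ?_⟩
  have hR₀ : 0 ≤ R := (exp_pos 40).le.trans hR
  set a := √R + 1
  set L := log (R + 1)
  have ha : 1 ≤ a := le_add_of_nonneg_left (sqrt_nonneg R)
  have hsq : R + 1 ≤ a ^ 2 ∧ a ^ 2 ≤ 2 * (R + 1) := by
    constructor <;> nlinarith [sq_sqrt hR₀, sq_nonneg (√R - 1), sqrt_nonneg R]
  have hlog_sq : log (a ^ 2) = 2 * log a := by simp [log_pow]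
  have hL : 40 ≤ L := by
    simpa using log_le_log (exp_pos 40) (hR.trans (le_add_of_nonneg_right zero_le_one))
  have hm_lower : L - log 2 ≤ 2 * (L - log a) := by
    have := log_le_log (by positivity) hsq.2
    rw [hlog_sq, log_mul two_ne_zero (by positivity)] at this
    linarith
  have hm_upper : (L - log a - 1) / a ≤ 1 := by
    have := log_le_log (by positivity) hsq.1
    rw [div_le_one (by positivity)]
    linarith [log_le_sub_one_of_pos (zero_lt_one.trans_le ha)]
  have hR_inv : 1 / (R + 1) ≤ 1 := by
    rw [div_le_one (by positivity)]
    linarith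
  have hshift := integral_comp_add_right
    (fun x => (L - log x) * ((x - 1) / x ^ 2)) (1 : ℝ) (a := √R) (b := R)
  simp only [add_sub_cancel_right] at hshift
  rw [hshift, integral_log_sub_log_mul_sub_one_div_sq (by positivity) (by positivity)]
  nlinarith [log_two_lt_d9]
end

section
/- Let n ≥ 2 be an integer, H ∈ ℝ, and let h be a real symmetric n×n matrix (h_{ij} = h_{ji} for all i,j) with trace equal to nH. Then nH·h_{11} − ∑_{α=1}^{n} h_{1α}² ≥ −∑_{i,j=1}^{n} h_{ij}² + n²(5−n)H²/4. -/
open Finset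

theorem stmt_15 (n : ℕ) (hn : 2 ≤ n) (H : ℝ)
    (h : Fin n → Fin n → ℝ)
    (hsymm : ∀ i j, h i j = h j i)
    (htrace : ∑ i, h i i = n * H) :
    (n : ℝ) * H * h ⟨0, by omega⟩ ⟨0, by omega⟩
        - ∑ α, (h ⟨0, by omega⟩ α) ^ 2
      ≥ -(∑ i, ∑ j, (h i j) ^ 2) + (n : ℝ) ^ 2 * (5 - (n : ℝ)) * H ^ 2 / 4 := by
  set i0 : Fin n := ⟨0, by omega⟩ with hi0
  set S : Finset (Fin n) := Finset.univ.erase i0 with hS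
  have hcard : (S.card : ℝ) = (n : ℝ) - 1 := by
    have : S.card = n - 1 := by
      rw [hS, Finset.card_erase_of_mem (Finset.mem_univ _), Finset.card_univ,
        Fintype.card_fin]
    rw [this]
    have : (1:ℕ) ≤ n := by omega
    push_cast [Nat.cast_sub this]
    ring
  set a : ℝ := h i0 i0 with ha
  set B : ℝ := ∑ α ∈ S, (h i0 α) ^ 2 with hB
  set T : ℝ := ∑ i ∈ S, h i i with hT
  set Q : ℝ := ∑ i ∈ S, (h i i) ^ 2 with hQ
  have hBnn : 0 ≤ B := Finset.sum_nonneg fun _ _ => sq_nonneg _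
  have hQnn : 0 ≤ Q := Finset.sum_nonneg fun _ _ => sq_nonneg _
  have hrow : ∑ α, (h i0 α) ^ 2 = a ^ 2 + B := by
    rw [ha, hB, ← Finset.add_sum_erase _ _ (Finset.mem_univ i0)]
  have htr : a + T = (n : ℝ) * H := by
    rw [ha, hT, hS, Finset.add_sum_erase Finset.univ (fun i => h i i)
      (Finset.mem_univ i0)]
    exact htrace
  have hCS : T ^ 2 ≤ ((n : ℝ) - 1) * Q := by
    have := sq_sum_le_card_mul_sum_sq (s := S) (f := fun i => h i i)
    calc T ^ 2 ≤ (S.card : ℝ) * Q := by exact_mod_cast this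
      _ = ((n:ℝ) - 1) * Q := by rw [hcard]
  have hnorm : a ^ 2 + 2 * B + Q ≤ ∑ i, ∑ j, (h i j) ^ 2 := by
    rw [← Finset.add_sum_erase _ _ (Finset.mem_univ i0), ← hS]
    have h1 : a ^ 2 + B ≤ ∑ j, (h i0 j) ^ 2 := le_of_eq hrow.symm
    have h2 : B + Q ≤ ∑ i ∈ S, ∑ j, (h i j) ^ 2 := by
      rw [hB, hQ, ← Finset.sum_add_distrib]
      apply Finset.sum_le_sum
      intro i hi
      have hne : i ≠ i0 := Finset.ne_of_mem_erase hi
      have hsub : ({i0, i} : Finset (Fin n)) ⊆ Finset.univ := Finset.subset_univ _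
      have := Finset.sum_le_sum_of_subset_of_nonneg hsub
        (fun j _ _ => sq_nonneg (h i j))
      calc (h i0 i) ^ 2 + (h i i) ^ 2
          = ∑ j ∈ ({i0, i} : Finset (Fin n)), (h i j) ^ 2 := by
            rw [Finset.sum_pair hne.symm, hsymm i0 i]
        _ ≤ ∑ j, (h i j) ^ 2 := this
    linarith
  have hn1 : (1:ℝ) ≤ (n:ℝ) - 1 := by
    have : (2:ℝ) ≤ (n:ℝ) := by exact_mod_cast hn
    linarith
  have main : 4*((n:ℝ)-1)*((a+T)*a + B + Q) ≥ ((n:ℝ)-1)*(5-(n:ℝ))*(a+T)^2 := by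
    nlinarith [sq_nonneg (((n:ℝ)-1)*a + ((n:ℝ)-3)*T), hCS,
      mul_nonneg (by linarith : (0:ℝ) ≤ (n:ℝ)-1) hBnn]
  have step : (a+T)*a + B + Q ≥ (5-(n:ℝ))*(a+T)^2/4 := by
    have hp : (0:ℝ) < (n:ℝ) - 1 := by linarith
    nlinarith [main, hp]
  have hprod : (n:ℝ)*H*a = (a+T)*a := by rw [htr]
  have hsq' : (n:ℝ)^2*(5-(n:ℝ))*H^2/4 = (5-(n:ℝ))*(a+T)^2/4 := by
    rw [show (n:ℝ)^2*(5-(n:ℝ))*H^2/4 = (5-(n:ℝ))*((n:ℝ)*H)^2/4 from by ring, ← htr]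
  rw [hrow]
  linarith [hnorm, step, hprod, hsq']
end
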